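/- arXiv:1704.08785 — 8 statements merged into one kernel-verified Lean document; each statement's English description precedes it below -/
import Mathlib

section
/- A subset S of the natural numbers is eventually periodic (i.e., there exist N and d ≥ 1 such that for all n ≥ N, n ∈ S iff n+d ∈ S) if and only if its generating function S_q = Σ_{n ∈ S} q^n is a rational function of q on the interval (-1,1). -/
/-!
Write `A = ∑_{n ∈ S} Xⁿ` for the formal generating series of `S`. By the Cauchy product and the
uniqueness of power series expansions, a polynomial identity `Q(q) S_q = P(q)` on `(-1, 1)` is the
same as the identity `Q · A = P` of formal power series. If `S` is eventually periodic with
period `d`, the coefficients of `(1 - X^d) · A` vanish eventually, so `S_q = P(q) / (1 - q^d)`.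
Conversely, if `Q · A = P` with `Q(0) ≠ 0`, then beyond `deg P` the indicator of `S` satisfies a
linear recurrence of order `deg Q`: each value is determined by the previous `deg Q` ones. These
windows take finitely many values, so one of them repeats, and the sequence is periodic from then
on.
-/

noncomputable def genFun (S : Set ℕ) (q : ℝ) : ℝ := ∑' n : S, q ^ (n : ℕ)

def EventuallyPeriodic (S : Set ℕ) : Prop :=
  ∃ N d : ℕ, 1 ≤ d ∧ ∀ n ≥ N, (n ∈ S ↔ n + d ∈ S)

open Filter Topology PowerSeries
open scoped Polynomial

theorem Polynomial.hasSum_coeff_mul_pow {R : Type*} [Semiring R] [TopologicalSpace R]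
    (p : R[X]) (x : R) : HasSum (fun n => p.coeff n * x ^ n) (p.eval x) := by
  rw [Polynomial.eval_eq_sum]
  exact hasSum_sum_of_ne_finset_zero fun n hn => by
    rw [Polynomial.notMem_support_iff.mp hn, zero_mul]

theorem Polynomial.summable_norm_coeff_mul_pow {R : Type*} [SeminormedRing R] (p : R[X]) (x : R) :
    Summable fun n => ‖p.coeff n * x ^ n‖ :=
  summable_of_ne_finset_zero (s := p.support) fun n hn => by
    rw [Polynomial.notMem_support_iff.mp hn, zero_mul, norm_zero]

theorem PowerSeries.hasSum_coeff_mul_mul_pow {R : Type*} [NormedCommRing R] [CompleteSpace R]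
    {f g : R⟦X⟧} {x : R} (hf : Summable fun n => ‖coeff n f * x ^ n‖)
    (hg : Summable fun n => ‖coeff n g * x ^ n‖) :
    HasSum (fun n => coeff n (f * g) * x ^ n)
      ((∑' n, coeff n f * x ^ n) * ∑' n, coeff n g * x ^ n) := by
  have cauchy : ∀ n, coeff n (f * g) * x ^ n = ∑ kl ∈ Finset.HasAntidiagonal.antidiagonal n,
      coeff kl.1 f * x ^ kl.1 * (coeff kl.2 g * x ^ kl.2) := by
    intro n
    rw [coeff_mul, Finset.sum_mul]
    refine Finset.sum_congr rfl fun kl hkl => ?_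
    rw [← Finset.HasAntidiagonal.mem_antidiagonal.mp hkl, pow_add]
    ring
  rw [funext cauchy, tsum_mul_tsum_eq_tsum_sum_antidiagonal_of_summable_norm hf hg]
  exact (summable_norm_sum_mul_antidiagonal_of_summable_norm hf hg).of_norm.hasSum

theorem eq_zero_of_eventually_hasSum_mul_pow_eq_zero {𝕜 : Type*} [NontriviallyNormedField 𝕜]
    [CompleteSpace 𝕜] {c : ℕ → 𝕜} (h : ∀ᶠ x in 𝓝 0, HasSum (fun n => c n * x ^ n) 0) :
    c = 0 := by
  set p := FormalMultilinearSeries.ofScalars 𝕜 c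
  obtain ⟨ε, hε, hball⟩ := Metric.eventually_nhds_iff.mp h
  obtain ⟨x, hx0, hxε⟩ := NormedField.exists_norm_lt 𝕜 hε
  have hx : (‖x‖₊ : ENNReal) ≤ p.radius := by
    refine p.le_radius_of_tendsto (l := 0) ?_
    have := tendsto_zero_iff_norm_tendsto_zero.mp
      (hball (y := x) (by rwa [dist_zero_right])).summable.tendsto_atTop_zero
    simpa only [p, FormalMultilinearSeries.ofScalars_norm, norm_mul, norm_pow, coe_nnnorm]
      using this
  have hp : HasFPowerSeriesAt p.sum p 0 :=
    (p.hasFPowerSeriesOnBall (lt_of_lt_of_le (by simpa using hx0) hx)).hasFPowerSeriesAt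
  have hsum : p.sum =ᶠ[𝓝 0] 0 := by
    filter_upwards [h] with y hy
    simpa [p, FormalMultilinearSeries.sum, mul_comm] using hy.tsum_eq
  exact (FormalMultilinearSeries.ofScalars_series_eq_zero 𝕜).mp (hp.eq_zero_of_eventually hsum)

theorem PowerSeries.exists_one_sub_X_pow_mul_mk_eq_coe {R : Type*} [CommRing R] {a : ℕ → R}
    {N d : ℕ} (h : ∀ n ≥ N, a (n + d) = a n) : ∃ P : R[X], (1 - X ^ d) * mk a = (P : R⟦X⟧) := by
  refine ⟨trunc (N + d) ((1 - X ^ d) * mk a), ext fun n => ?_⟩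
  rw [Polynomial.coeff_coe, coeff_trunc]
  split_ifs with hn
  · rfl
  obtain ⟨m, rfl⟩ := Nat.exists_eq_add_of_le' (not_lt.mp hn |>.trans' (Nat.le_add_left d N))
  rw [sub_mul, one_mul, map_sub, coeff_X_pow_mul', if_pos (Nat.le_add_left d m),
    Nat.add_sub_cancel, coeff_mk, coeff_mk, h m (by omega), sub_self]

theorem PowerSeries.coeff_add_natDegree_coe_mul_mk {R : Type*} [CommSemiring R]
    (Q : R[X]) (a : ℕ → R) (n : ℕ) :
    coeff (n + Q.natDegree) ((Q : R⟦X⟧) * mk a) =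
      ∑ i ∈ Finset.range (Q.natDegree + 1), Q.coeff i * a (n + Q.natDegree - i) := by
  rw [coeff_mul, Finset.Nat.sum_antidiagonal_eq_sum_range_succ_mk]
  simp only [Polynomial.coeff_coe, coeff_mk]
  refine (Finset.sum_subset (Finset.range_subset_range.mpr (by omega)) fun i _ hi => ?_).symm
  rw [Polynomial.coeff_eq_zero_of_natDegree_lt (by simpa using hi), zero_mul]

theorem PowerSeries.mk_add_natDegree_eq_of_coe_mul_mk_eq_coe {R : Type*} [CommRing R]
    [NoZeroDivisors R] {P Q : R[X]} {a : ℕ → R} (h : (Q : R⟦X⟧) * mk a = P)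
    (hQ : Q.coeff 0 ≠ 0) {n n' : ℕ} (hn : P.natDegree < n) (hn' : P.natDegree < n')
    (hw : ∀ j < Q.natDegree, a (n + j) = a (n' + j)) :
    a (n + Q.natDegree) = a (n' + Q.natDegree) := by
  set K := Q.natDegree
  have recurrence : ∀ m, P.natDegree < m → ∑ i ∈ Finset.range K,
      Q.coeff (i + 1) * a (m + (K - (i + 1))) + Q.coeff 0 * a (m + K) = 0 := by
    intro m hm
    have := coeff_add_natDegree_coe_mul_mk Q a m
    rw [h, Polynomial.coeff_coe, Polynomial.coeff_eq_zero_of_natDegree_lt (by omega),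
      Finset.sum_range_succ'] at this
    rw [this]
    refine congrArg₂ _ (Finset.sum_congr rfl fun i hi => ?_) rfl
    rw [Finset.mem_range] at hi
    rw [show m + K - (i + 1) = m + (K - (i + 1)) by omega]
  have tails : ∑ i ∈ Finset.range K, Q.coeff (i + 1) * a (n + (K - (i + 1))) =
      ∑ i ∈ Finset.range K, Q.coeff (i + 1) * a (n' + (K - (i + 1))) :=
    Finset.sum_congr rfl fun i hi => by rw [hw _ (by rw [Finset.mem_range] at hi; omega)]
  refine mul_left_cancel₀ hQ ?_
  linear_combination recurrence n hn - recurrence n' hn' - tails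

theorem exists_eventuallyPeriodic_of_window {α : Type*} [Finite α] (s : ℕ → α) (K M : ℕ)
    (hs : ∀ n ≥ M, ∀ n' ≥ M, (∀ j < K, s (n + j) = s (n' + j)) → s (n + K) = s (n' + K)) :
    ∃ N d, 0 < d ∧ ∀ n ≥ N, s (n + d) = s n := by
  obtain ⟨m, m', hne, heq⟩ :=
    Finite.exists_ne_map_eq_of_infinite fun m : ℕ => fun j : Fin K => s (M + m + j)
  wlog hlt : m < m' generalizing m m'
  · exact this m' m hne.symm heq.symm (by omega)
  have key : ∀ i, s (M + m' + i) = s (M + m + i) := by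
    intro i
    induction i using Nat.strong_induction_on with
    | _ i ih =>
      rcases lt_or_ge i K with hi | hi
      · exact (congrFun heq ⟨i, hi⟩).symm
      obtain ⟨k, rfl⟩ := Nat.exists_eq_add_of_le' hi
      simpa only [add_assoc] using hs (M + m' + k) (by omega) (M + m + k) (by omega)
        fun j hj => by simpa only [add_assoc] using ih (k + j) (by omega)
  refine ⟨M + m, m' - m, by omega, fun n hn => ?_⟩
  obtain ⟨i, rfl⟩ := Nat.exists_eq_add_of_le hn
  rw [show M + m + i + (m' - m) = M + m' + i by omega]
  exact key i

theorem Set.indicator_one_apply_eq_iff {α M : Type*} [Zero M] [One M] [NeZero (1 : M)]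
    (S : Set α) {a b : α} : S.indicator (1 : α → M) a = S.indicator 1 b ↔ (a ∈ S ↔ b ∈ S) := by
  by_cases ha : a ∈ S <;> by_cases hb : b ∈ S <;> simp [ha, hb]

theorem Polynomial.eval_one_sub_X_pow_ne_zero {q : ℝ} (hq : q ∈ Set.Ioo (-1) 1) {d : ℕ}
    (hd : d ≠ 0) : (1 - X ^ d : ℝ[X]).eval q ≠ 0 := by
  have : |q ^ d| < 1 := by
    rw [abs_pow]
    exact pow_lt_one₀ (abs_nonneg q) (abs_lt.mpr hq) hd
  rw [eval_sub, eval_one, eval_pow, eval_X, sub_ne_zero]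
  exact fun h => by simp [← h] at this

noncomputable def genSeries (S : Set ℕ) : ℝ⟦X⟧ := mk (S.indicator 1)

theorem genFun_eq_tsum (S : Set ℕ) (q : ℝ) :
    genFun S q = ∑' n, coeff n (genSeries S) * q ^ n := by
  rw [genFun, tsum_subtype (f := fun n => q ^ n)]
  congr 1 with n
  by_cases hn : n ∈ S <;> simp [genSeries, hn]

theorem summable_norm_coeff_genSeries_mul_pow (S : Set ℕ) {q : ℝ} (hq : q ∈ Set.Ioo (-1) 1) :
    Summable fun n => ‖coeff n (genSeries S) * q ^ n‖ := by
  refine (summable_geometric_of_lt_one (abs_nonneg q) (abs_lt.mpr hq)).of_nonneg_of_le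
    (fun _ => norm_nonneg _) fun n => ?_
  by_cases hn : n ∈ S <;> simp [genSeries, hn]

theorem hasSum_coeff_coe_mul_genSeries_mul_pow (S : Set ℕ) (Q : ℝ[X]) {q : ℝ}
    (hq : q ∈ Set.Ioo (-1) 1) :
    HasSum (fun n => coeff n ((Q : ℝ⟦X⟧) * genSeries S) * q ^ n) (Q.eval q * genFun S q) := by
  have hQ : Summable fun n => ‖coeff n (Q : ℝ⟦X⟧) * q ^ n‖ := by
    simpa only [Polynomial.coeff_coe] using Q.summable_norm_coeff_mul_pow q
  have := hasSum_coeff_mul_mul_pow hQ (summable_norm_coeff_genSeries_mul_pow S hq)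
  rwa [← genFun_eq_tsum, tsum_congr fun n => by rw [Polynomial.coeff_coe],
    (Q.hasSum_coeff_mul_pow q).tsum_eq] at this

theorem coe_mul_genSeries_eq_iff {S : Set ℕ} {P Q : ℝ[X]} :
    (Q : ℝ⟦X⟧) * genSeries S = P ↔ ∀ q ∈ Set.Ioo (-1) 1, Q.eval q * genFun S q = P.eval q := by
  constructor
  · intro h q hq
    have := hasSum_coeff_coe_mul_genSeries_mul_pow S Q hq
    simp only [h, Polynomial.coeff_coe] at this
    exact this.unique (P.hasSum_coeff_mul_pow q)
  · intro h
    have hzero := eq_zero_of_eventually_hasSum_mul_pow_eq_zero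
      (c := fun n => coeff n ((Q : ℝ⟦X⟧) * genSeries S) - P.coeff n) <| by
      filter_upwards [Ioo_mem_nhds (by norm_num : (-1 : ℝ) < 0) zero_lt_one] with q hq
      simpa only [sub_mul, h q hq, sub_self] using
        (hasSum_coeff_coe_mul_genSeries_mul_pow S Q hq).sub (P.hasSum_coeff_mul_pow q)
    ext n
    simpa [sub_eq_zero] using congrFun hzero n

theorem EventuallyPeriodic.exists_coe_mul_genSeries_eq {S : Set ℕ} (h : EventuallyPeriodic S) :
    ∃ d ≠ 0, ∃ P : ℝ[X], ((1 - Polynomial.X ^ d : ℝ[X]) : ℝ⟦X⟧) * genSeries S = P := by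
  obtain ⟨N, d, hd, hper⟩ := h
  refine ⟨d, by omega, ?_⟩
  simpa only [Polynomial.coe_sub, Polynomial.coe_one, Polynomial.coe_pow, Polynomial.coe_X,
    genSeries] using
    exists_one_sub_X_pow_mul_mk_eq_coe (a := S.indicator (1 : ℕ → ℝ)) (N := N)
      fun n hn => (S.indicator_one_apply_eq_iff).mpr (hper n hn).symm

theorem eventuallyPeriodic_of_coe_mul_genSeries_eq {S : Set ℕ} {P Q : ℝ[X]}
    (h : (Q : ℝ⟦X⟧) * genSeries S = P) (hQ : Q.coeff 0 ≠ 0) : EventuallyPeriodic S := by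
  obtain ⟨N, d, hd, hper⟩ :=
    exists_eventuallyPeriodic_of_window (· ∈ S) Q.natDegree (P.natDegree + 1)
      fun n hn n' hn' hw => propext <| (S.indicator_one_apply_eq_iff (M := ℝ)).mp <|
        mk_add_natDegree_eq_of_coe_mul_mk_eq_coe h hQ hn hn' fun j hj =>
          (S.indicator_one_apply_eq_iff).mpr (hw j hj).to_iff
  exact ⟨N, d, hd, fun n hn => (hper n hn).symm.to_iff⟩

theorem eventuallyPeriodic_iff_rational (S : Set ℕ) :
    EventuallyPeriodic S ↔
      ∃ P Q : Polynomial ℝ,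
        (∀ q ∈ Set.Ioo (-1 : ℝ) 1, Polynomial.eval q Q ≠ 0) ∧
        (∀ q ∈ Set.Ioo (-1 : ℝ) 1,
          genFun S q = Polynomial.eval q P / Polynomial.eval q Q) := by
  constructor
  · intro h
    obtain ⟨d, hd, P, hP⟩ := h.exists_coe_mul_genSeries_eq
    have hQ q (hq : q ∈ Set.Ioo (-1 : ℝ) 1) := Polynomial.eval_one_sub_X_pow_ne_zero hq hd
    refine ⟨P, 1 - Polynomial.X ^ d, hQ, fun q hq => eq_div_of_mul_eq (hQ q hq) ?_⟩
    rw [mul_comm]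
    exact coe_mul_genSeries_eq_iff.mp hP q hq
  · rintro ⟨P, Q, hQ, hgen⟩
    have hQ0 : Q.coeff 0 ≠ 0 := by
      rw [Polynomial.coeff_zero_eq_eval_zero]
      exact hQ 0 ⟨by norm_num, by norm_num⟩
    refine eventuallyPeriodic_of_coe_mul_genSeries_eq (P := P) (coe_mul_genSeries_eq_iff.mpr ?_) hQ0
    intro q hq
    rw [hgen q hq, mul_div_cancel₀ _ (hQ q hq)]
end

section
/- The germ-ordering ⪯ is a total order on the collection of eventually periodic subsets of ℕ: for any two eventually periodic sets S, S', either S ⪯ S' or S' ⪯ S. -/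
open Classical

def GermLE (S S' : Set ℕ) : Prop :=
  ∃ ε > (0 : ℝ), ∀ q ∈ Set.Ioo (1 - ε) (1 : ℝ), genFun S q ≤ genFun S' q

/-- Iterated periodicity. -/
lemma per_iter (S : Set ℕ) (N d : ℕ) (h : ∀ n ≥ N, (n ∈ S ↔ n + d ∈ S)) :
    ∀ (k : ℕ), ∀ n ≥ N, (n ∈ S ↔ n + k * d ∈ S) := by
  intro k
  induction k with
  | zero => simp
  | succ k ih =>
    intro n hn
    have h1 := ih n hn
    have h2 := h (n + k * d) (le_trans hn (Nat.le_add_right _ _))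
    rw [show n + (k+1)*d = n + k*d + d from by ring]
    exact h1.trans h2

/-- A real polynomial has constant sign on some left neighbourhood of 1. -/
lemma poly_sign (P : Polynomial ℝ) :
    (∃ ε > (0 : ℝ), ∀ q ∈ Set.Ioo (1 - ε) (1:ℝ), 0 ≤ P.eval q) ∨
    (∃ ε > (0 : ℝ), ∀ q ∈ Set.Ioo (1 - ε) (1:ℝ), P.eval q ≤ 0) := by
  rcases eq_or_ne P 0 with rfl | hP
  · left; exact ⟨1, one_pos, fun q _ => by simp⟩
  have hfin : {x : ℝ | P.IsRoot x}.Finite := Polynomial.finite_setOf_isRoot hP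
  have hT : ({x : ℝ | P.IsRoot x} ∩ Set.Iio 1).Finite := hfin.inter_of_left _
  set Tf : Finset ℝ := insert (0:ℝ) hT.toFinset with hTf
  have hTne : Tf.Nonempty := ⟨0, Finset.mem_insert_self _ _⟩
  set m : ℝ := Tf.max' hTne with hm
  have hall : ∀ x ∈ Tf, x < 1 := by
    intro x hx
    rcases Finset.mem_insert.1 hx with h0 | hmem
    · rw [h0]; exact one_pos
    · exact ((Set.Finite.mem_toFinset hT).1 hmem).2
  have hm1 : m < 1 := hall _ (Tf.max'_mem hTne)
  have hnoroot : ∀ x ∈ Set.Ioo m 1, ¬ P.IsRoot x := by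
    intro x hx hroot
    have hxT : x ∈ Tf := by
      rw [hTf]
      exact Finset.mem_insert_of_mem ((Set.Finite.mem_toFinset hT).2 ⟨hroot, hx.2⟩)
    exact absurd (Tf.le_max' x hxT) (not_le.2 hx.1)
  have hε : (0:ℝ) < 1 - m := by linarith
  by_contra hcon
  push_neg at hcon
  obtain ⟨h1, h2⟩ := hcon
  obtain ⟨q1, hq1, hq1neg⟩ := h1 (1 - m) hε
  obtain ⟨q2, hq2, hq2pos⟩ := h2 (1 - m) hε
  rw [show (1:ℝ) - (1 - m) = m by ring] at hq1 hq2
  have hcont : ∀ a b : ℝ, ContinuousOn (fun x => P.eval x) (Set.Icc a b) :=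
    fun a b => P.continuous_aeval.continuousOn
  rcases le_total q1 q2 with hle | hle
  · have := intermediate_value_Icc hle (hcont q1 q2)
    have h0 : (0:ℝ) ∈ Set.Icc (P.eval q1) (P.eval q2) := ⟨le_of_lt (by linarith), le_of_lt (by linarith)⟩
    obtain ⟨x, hx, hx0⟩ := this h0
    exact hnoroot x ⟨lt_of_lt_of_le hq1.1 hx.1, lt_of_le_of_lt hx.2 hq2.2⟩ hx0
  · have := intermediate_value_Icc' hle (hcont q2 q1)
    have h0 : (0:ℝ) ∈ Set.Icc (P.eval q1) (P.eval q2) := ⟨le_of_lt (by linarith), le_of_lt (by linarith)⟩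
    obtain ⟨x, hx, hx0⟩ := this h0
    exact hnoroot x ⟨lt_of_lt_of_le hq2.1 hx.1, lt_of_le_of_lt hx.2 hq1.2⟩ hx0

/-- Closed form of the generating function of an (eventually) periodic set. -/
lemma genFun_eq (S : Set ℕ) (M D : ℕ) (hD : 0 < D)
    (hper : ∀ j : ℕ, ∀ n ≥ M, (n ∈ S ↔ n + j * D ∈ S))
    (q : ℝ) (hq0 : 0 < q) (hq1 : q < 1) :
    genFun S q = (∑ n ∈ Finset.range M, if n ∈ S then q ^ n else 0)
      + (∑ r ∈ Finset.range D, if M + r ∈ S then q ^ (M + r) else 0) * (1 - q ^ D)⁻¹ := by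
  haveI : NeZero D := ⟨hD.ne'⟩
  have hq0' : (0:ℝ) ≤ q := hq0.le
  set f : ℕ → ℝ := S.indicator (fun n => q ^ n) with hf
  have hgeo : Summable (fun n : ℕ => q ^ n) := summable_geometric_of_lt_one hq0' hq1
  have hsum : Summable f := hgeo.indicator S
  have h1 : genFun S q = ∑' n : ℕ, f n := tsum_subtype S _
  have htail : Summable (fun n => f (n + M)) := (summable_nat_add_iff M).2 hsum
  have hsplit : (∑ i ∈ Finset.range M, f i) + ∑' i, f (i + M) = ∑' i, f i :=
    Summable.sum_add_tsum_nat_add M hsum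
  -- rewrite the tail using div/mod
  set e := (Nat.divModEquiv D).symm with he
  have htail2 : Summable ((fun n => f (n + M)) ∘ e) := e.summable_iff.2 htail
  have hre : ∀ p : ℕ × Fin D, ((fun n => f (n + M)) ∘ e) p
      = (if M + (p.2 : ℕ) ∈ S then q ^ (M + (p.2:ℕ)) else 0) * (q ^ D) ^ p.1 := by
    intro p
    have heval : e p = p.1 * D + (p.2 : ℕ) := rfl
    have hmem : (p.1 * D + (p.2:ℕ) + M ∈ S) ↔ (M + (p.2:ℕ) ∈ S) := by
      have := hper p.1 (M + (p.2:ℕ)) (Nat.le_add_right _ _)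
      rw [show M + (p.2:ℕ) + p.1 * D = p.1 * D + (p.2:ℕ) + M by ring] at this
      exact this.symm
    simp only [Function.comp_apply, heval, hf, Set.indicator_apply, hmem]
    by_cases h : M + (p.2:ℕ) ∈ S
    · simp only [h, if_true]
      rw [show p.1 * D + (p.2:ℕ) + M = (M + (p.2:ℕ)) + D * p.1 by ring, pow_add, pow_mul]
    · simp [h]
  have htsum_tail : ∑' i, f (i + M)
      = (∑ r ∈ Finset.range D, if M + r ∈ S then q ^ (M + r) else 0) * (1 - q ^ D)⁻¹ := by
    have h2 : ∑' i, f (i + M) = ∑' p : ℕ × Fin D, ((fun n => f (n + M)) ∘ e) p :=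
      (e.tsum_eq _).symm
    rw [h2]
    have htail2' : Summable (fun p : ℕ × Fin D =>
        (if M + (p.2 : ℕ) ∈ S then q ^ (M + (p.2:ℕ)) else 0) * (q ^ D) ^ p.1) := by
      refine htail2.congr hre
    calc ∑' p : ℕ × Fin D, ((fun n => f (n + M)) ∘ e) p
        = ∑' p : ℕ × Fin D,
            (if M + (p.2 : ℕ) ∈ S then q ^ (M + (p.2:ℕ)) else 0) * (q ^ D) ^ p.1 :=
          tsum_congr hre
      _ = ∑' (a : ℕ) (b : Fin D),
            (if M + (b : ℕ) ∈ S then q ^ (M + (b:ℕ)) else 0) * (q ^ D) ^ a := by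
          exact Summable.tsum_prod' htail2' (fun a => (by
            apply Summable.of_finite))
      _ = ∑' (a : ℕ), (∑ b : Fin D,
            (if M + (b : ℕ) ∈ S then q ^ (M + (b:ℕ)) else 0)) * (q ^ D) ^ a := by
          refine tsum_congr fun a => ?_
          rw [tsum_fintype, Finset.sum_mul]
      _ = (∑ b : Fin D, (if M + (b : ℕ) ∈ S then q ^ (M + (b:ℕ)) else 0)) * ∑' a : ℕ, (q ^ D) ^ a := by
          rw [tsum_mul_left]
      _ = (∑ r ∈ Finset.range D, if M + r ∈ S then q ^ (M + r) else 0) * (1 - q ^ D)⁻¹ := by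
          rw [tsum_geometric_of_lt_one (by positivity) (pow_lt_one₀ hq0' hq1 hD.ne'),
            Fin.sum_univ_eq_sum_range (fun r => if M + r ∈ S then q ^ (M + r) else 0)]
  have hhead : ∀ n, f n = if n ∈ S then q ^ n else 0 := fun n => Set.indicator_apply _ _ _
  have hhd : (∑ i ∈ Finset.range M, f i) = ∑ n ∈ Finset.range M, if n ∈ S then q ^ n else 0 :=
    Finset.sum_congr rfl fun n _ => hhead n
  rw [h1, ← hsplit, htsum_tail, hhd]

theorem germLE_total_on_eventuallyPeriodic (S S' : Set ℕ)
    (hS : EventuallyPeriodic S) (hS' : EventuallyPeriodic S') :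
    GermLE S S' ∨ GermLE S' S := by
  obtain ⟨N, d, hd, hper⟩ := hS
  obtain ⟨N', d', hd', hper'⟩ := hS'
  set M := max N N' with hM
  set D := d * d' with hDdef
  have hD : 0 < D := Nat.mul_pos hd hd'
  have hperS : ∀ j : ℕ, ∀ n ≥ M, (n ∈ S ↔ n + j * D ∈ S) := by
    intro j n hn
    have := per_iter S N d hper (j * d') n (le_trans (le_max_left _ _) hn)
    rwa [show j * d' * d = j * D by rw [hDdef]; ring] at this
  have hperS' : ∀ j : ℕ, ∀ n ≥ M, (n ∈ S' ↔ n + j * D ∈ S') := by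
    intro j n hn
    have := per_iter S' N' d' hper' (j * d) n (le_trans (le_max_right _ _) hn)
    rwa [show j * d * d' = j * D by rw [hDdef]; ring] at this
  -- the coefficient function and the polynomial controlling the sign
  set c : ℕ → ℝ := fun n => (if n ∈ S then (1:ℝ) else 0) - (if n ∈ S' then (1:ℝ) else 0) with hc
  set P : Polynomial ℝ :=
    (∑ n ∈ Finset.range M, Polynomial.C (c n) * Polynomial.X ^ n) * (1 - Polynomial.X ^ D)
      + ∑ r ∈ Finset.range D, Polynomial.C (c (M + r)) * Polynomial.X ^ (M + r) with hP
  have hPeval : ∀ q : ℝ, P.eval q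
      = (∑ n ∈ Finset.range M, c n * q ^ n) * (1 - q ^ D)
        + ∑ r ∈ Finset.range D, c (M + r) * q ^ (M + r) := by
    intro q
    simp [hP, Polynomial.eval_finset_sum]
  have key : ∀ q : ℝ, 0 < q → q < 1 →
      genFun S q - genFun S' q = P.eval q * (1 - q ^ D)⁻¹ := by
    intro q hq0 hq1
    have hne : (1 : ℝ) - q ^ D ≠ 0 := by
      have : q ^ D < 1 := pow_lt_one₀ hq0.le hq1 hD.ne'
      linarith
    rw [genFun_eq S M D hD hperS q hq0 hq1, genFun_eq S' M D hD hperS' q hq0 hq1, hPeval]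
    have hA : ∀ (T : Set ℕ), (∑ n ∈ Finset.range M, if n ∈ T then q ^ n else 0)
        = ∑ n ∈ Finset.range M, (if n ∈ T then (1:ℝ) else 0) * q ^ n := by
      intro T; exact Finset.sum_congr rfl fun n _ => by split <;> simp
    have hB : ∀ (T : Set ℕ), (∑ r ∈ Finset.range D, if M + r ∈ T then q ^ (M + r) else 0)
        = ∑ r ∈ Finset.range D, (if M + r ∈ T then (1:ℝ) else 0) * q ^ (M + r) := by
      intro T; exact Finset.sum_congr rfl fun n _ => by split <;> simp
    rw [hA S, hA S', hB S, hB S']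
    simp only [hc, sub_mul, Finset.sum_sub_distrib]
    field_simp
    ring
  rcases poly_sign P with ⟨ε, hε, hsig⟩ | ⟨ε, hε, hsig⟩
  · right
    refine ⟨min ε 1, lt_min hε one_pos, fun q hq => ?_⟩
    have hq0 : 0 < q := by
      have := hq.1; have : 1 - min ε 1 < q := this
      have hm : (1:ℝ) - min ε 1 ≥ 0 := by
        have := min_le_right ε (1:ℝ); linarith
      linarith
    have hq1 : q < 1 := hq.2
    have hqI : q ∈ Set.Ioo (1 - ε) (1:ℝ) := by
      constructor
      · have := min_le_left ε (1:ℝ); have := hq.1; simp only [Set.mem_Ioo] at *; linarith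
      · exact hq1
    have hpos : 0 < (1 - q ^ D)⁻¹ := by
      have h2 : q ^ D < 1 := pow_lt_one₀ hq0.le hq1 hD.ne'
      have : (0:ℝ) < 1 - q ^ D := by linarith
      exact inv_pos.2 this
    have := key q hq0 hq1
    nlinarith [hsig q hqI, this]
  · left
    refine ⟨min ε 1, lt_min hε one_pos, fun q hq => ?_⟩
    have hq0 : 0 < q := by
      have hm : (1:ℝ) - min ε 1 ≥ 0 := by
        have := min_le_right ε (1:ℝ); linarith
      have := hq.1; linarith
    have hq1 : q < 1 := hq.2
    have hqI : q ∈ Set.Ioo (1 - ε) (1:ℝ) := by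
      constructor
      · have := min_le_left ε (1:ℝ); have := hq.1; simp only [Set.mem_Ioo] at *; linarith
      · exact hq1
    have hpos : 0 < (1 - q ^ D)⁻¹ := by
      have h2 : q ^ D < 1 := pow_lt_one₀ hq0.le hq1 hD.ne'
      have : (0:ℝ) < 1 - q ^ D := by linarith
      exact inv_pos.2 this
    have := key q hq0 hq1
    nlinarith [hsig q hqI, this]
end

section
/- Let S be the set of natural numbers whose decimal expansion has an even number of digits and S' its complement in ℕ. Then S and S' are incomparable in the germ-ordering: neither S ⪯ S' nor S' ⪯ S holds. -/
/-- The set of natural numbers with an even number of decimal digits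
(0 is regarded as having one digit). -/
def EvenDigits : Set ℕ :=
  {n : ℕ | ∃ k : ℕ, 10 ^ (2 * k + 1) ≤ n ∧ n < 10 ^ (2 * k + 2)}

open Filter Topology Real

section genFun

variable {q : ℝ}

theorem genFun_eq_tsum_indicator (S : Set ℕ) :
    genFun S q = ∑' n, S.indicator (q ^ ·) n :=
  tsum_subtype S _

theorem summable_indicator_pow (S : Set ℕ) (hq0 : 0 ≤ q) (hq1 : q < 1) :
    Summable (S.indicator (q ^ ·)) :=
  (summable_geometric_of_lt_one hq0 hq1).indicator S

theorem genFun_add_genFun_compl (S : Set ℕ) (hq0 : 0 ≤ q) (hq1 : q < 1) :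
    genFun S q + genFun Sᶜ q = (1 - q)⁻¹ := by
  rw [genFun_eq_tsum_indicator, genFun_eq_tsum_indicator, ← tsum_geometric_of_lt_one hq0 hq1,
    ← (summable_indicator_pow S hq0 hq1).tsum_add (summable_indicator_pow Sᶜ hq0 hq1)]
  simp_rw [Set.indicator_self_add_compl_apply]

theorem mul_genFun_compl (S : Set ℕ) (hq0 : 0 ≤ q) (hq1 : q < 1) :
    (1 - q) * genFun Sᶜ q = 1 - (1 - q) * genFun S q := by
  have hq : 1 - q ≠ 0 := by linarith
  rw [eq_sub_iff_add_eq, ← mul_add, add_comm, genFun_add_genFun_compl S hq0 hq1,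
    mul_inv_cancel₀ hq]

theorem sub_pow_le_mul_genFun {S : Set ℕ} {a b : ℕ} (hab : a ≤ b) (hS : Set.Ico a b ⊆ S)
    (hq0 : 0 ≤ q) (hq1 : q < 1) :
    q ^ a - q ^ b ≤ (1 - q) * genFun S q := by
  have hsum : ∑ n ∈ Finset.Ico a b, S.indicator (q ^ ·) n ≤ genFun S q := by
    rw [genFun_eq_tsum_indicator]
    exact (summable_indicator_pow S hq0 hq1).sum_le_tsum _
      fun n _ ↦ Set.indicator_nonneg (fun m _ ↦ pow_nonneg hq0 m) n
  rw [Finset.sum_congr rfl fun n hn ↦ Set.indicator_of_mem (hS (by simpa using hn)) _,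
    geom_sum_Ico' hq1.ne hab, div_le_iff₀' (by linarith)] at hsum
  exact hsum

theorem mul_genFun_le_of_disjoint {S : Set ℕ} {a b : ℕ} (hab : a ≤ b)
    (hS : Disjoint S (Set.Ico a b)) (hq0 : 0 ≤ q) (hq1 : q < 1) :
    (1 - q) * genFun S q ≤ (1 - q) * a + q ^ b := by
  set f := S.indicator (q ^ ·)
  have hf_le : ∀ n, f n ≤ q ^ n := Set.indicator_le_self' fun n _ ↦ pow_nonneg hq0 n
  have hhead : ∑ n ∈ Finset.range a, f n ≤ a := by
    simpa using Finset.sum_le_sum (s := Finset.range a)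
      fun n _ ↦ (hf_le n).trans (pow_le_one₀ hq0 hq1.le)
  have hgap : ∑ n ∈ Finset.Ico a b, f n = 0 :=
    Finset.sum_eq_zero fun n hn ↦
      Set.indicator_of_notMem (Set.disjoint_right.1 hS (by simpa using hn)) _
  have htail : ∑' n, f (n + b) ≤ q ^ b * (1 - q)⁻¹ := by
    rw [← tsum_geometric_of_lt_one hq0 hq1, ← tsum_mul_left]
    refine Summable.tsum_le_tsum (fun n ↦ ?_) ((summable_nat_add_iff b).2
      (summable_indicator_pow S hq0 hq1)) ((summable_geometric_of_lt_one hq0 hq1).mul_left _)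
    simpa only [pow_add, mul_comm] using hf_le (n + b)
  have hq : 0 < 1 - q := by linarith
  rw [genFun_eq_tsum_indicator, ← (summable_indicator_pow S hq0 hq1).sum_add_tsum_nat_add b,
    ← Finset.sum_range_add_sum_Ico _ hab, hgap, add_zero]
  calc (1 - q) * (∑ n ∈ Finset.range a, f n + ∑' n, f (n + b))
      ≤ (1 - q) * (a + q ^ b * (1 - q)⁻¹) := by gcongr
    _ = (1 - q) * a + q ^ b := by field_simp

end genFun

theorem GermLE.eventually_le {S S' : Set ℕ} (h : GermLE S S') :
    ∀ᶠ q in 𝓝[<] (1 : ℝ), genFun S q ≤ genFun S' q := by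
  obtain ⟨ε, hε, hle⟩ := h
  filter_upwards [Ioo_mem_nhdsLT (by linarith : 1 - ε < 1)] using hle

theorem GermLE.eventually_mul_genFun_le_half {S : Set ℕ} (h : GermLE S Sᶜ) :
    ∀ᶠ q in 𝓝[<] (1 : ℝ), (1 - q) * genFun S q ≤ 1 / 2 := by
  filter_upwards [h.eventually_le, Ioo_mem_nhdsLT zero_lt_one] with q hq ⟨hq0, hq1⟩
  rw [← mul_le_mul_iff_of_pos_left (sub_pos.2 hq1), mul_genFun_compl S hq0.le hq1] at hq
  linarith

theorem GermLE.eventually_half_le_mul_genFun {S : Set ℕ} (h : GermLE Sᶜ S) :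
    ∀ᶠ q in 𝓝[<] (1 : ℝ), 1 / 2 ≤ (1 - q) * genFun S q := by
  filter_upwards [h.eventually_le, Ioo_mem_nhdsLT zero_lt_one] with q hq ⟨hq0, hq1⟩
  rw [← mul_le_mul_iff_of_pos_left (sub_pos.2 hq1), mul_genFun_compl S hq0.le hq1] at hq
  linarith

theorem tendsto_exp_neg_div_nhdsLT {θ : ℝ} (hθ : 0 < θ) {N : ℕ → ℝ}
    (hN : Tendsto N atTop atTop) :
    Tendsto (fun k ↦ exp (-θ / N k)) atTop (𝓝[<] 1) := by
  refine tendsto_nhdsWithin_iff.2 ⟨?_, ?_⟩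
  · simpa only [exp_zero, Function.comp_def] using
      (continuous_exp.tendsto 0).comp (tendsto_const_nhds.div_atTop hN)
  · filter_upwards [hN.eventually_gt_atTop 0] with k hk
    exact exp_lt_one_iff.2 (div_neg_of_neg_of_pos (by linarith) hk)

theorem tendsto_ten_pow_odd : Tendsto (fun k : ℕ ↦ (10 : ℝ) ^ (2 * k + 1)) atTop atTop :=
  (tendsto_pow_atTop_atTop_of_one_lt (by norm_num)).comp
    (tendsto_atTop_mono (fun k ↦ show k ≤ 2 * k + 1 by omega) tendsto_id)

theorem exp_div_natCast_pow (x : ℝ) {N : ℕ} (hN : N ≠ 0) : exp (x / N) ^ N = exp x := by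
  rw [← exp_nat_mul, mul_div_cancel₀ _ (by exact_mod_cast hN)]

theorem exp_neg_two_le : exp (-2) ≤ 1 / 5 := by
  rw [exp_neg, one_div]
  have := quadratic_le_exp_of_nonneg (x := 2) (by norm_num)
  exact inv_anti₀ (by norm_num) (by linarith)

theorem exp_neg_div_lt_one {θ N : ℝ} (hθ : 0 < θ) (hN : 0 < N) : exp (-θ / N) < 1 :=
  exp_lt_one_iff.2 (div_neg_of_neg_of_pos (neg_neg_of_pos hθ) hN)

theorem Ico_subset_evenDigits (k : ℕ) :
    Set.Ico (10 ^ (2 * k + 1)) (10 ^ (2 * k + 2)) ⊆ EvenDigits :=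
  fun _ hn ↦ ⟨k, hn⟩

theorem disjoint_evenDigits_Ico (k : ℕ) :
    Disjoint EvenDigits (Set.Ico (10 ^ (2 * k)) (10 ^ (2 * k + 1))) := by
  refine Set.disjoint_left.2 fun n ⟨m, hm₁, hm₂⟩ ⟨hk₁, hk₂⟩ ↦ ?_
  rcases lt_or_ge m k with hmk | hkm
  · have : 10 ^ (2 * m + 2) ≤ 10 ^ (2 * k) := Nat.pow_le_pow_right (by norm_num) (by omega)
    omega
  · have : 10 ^ (2 * k + 1) ≤ 10 ^ (2 * m + 1) := Nat.pow_le_pow_right (by norm_num) (by omega)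
    omega

theorem exp_neg_sub_le_mul_genFun_evenDigits (k : ℕ) {θ : ℝ} (hθ : 0 < θ) :
    exp (-θ) - exp (-(10 * θ)) ≤
      (1 - exp (-θ / 10 ^ (2 * k + 1))) * genFun EvenDigits (exp (-θ / 10 ^ (2 * k + 1))) := by
  set q := exp (-θ / 10 ^ (2 * k + 1))
  have hq : q ^ 10 ^ (2 * k + 1) = exp (-θ) := by
    simpa using exp_div_natCast_pow (-θ) (N := 10 ^ (2 * k + 1)) (by positivity)
  have hq' : q ^ 10 ^ (2 * k + 2) = exp (-(10 * θ)) := by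
    rw [pow_succ, pow_mul, hq, ← exp_nat_mul]
    norm_num
  rw [← hq, ← hq']
  exact sub_pow_le_mul_genFun (Nat.pow_le_pow_right (by norm_num) (by omega))
    (Ico_subset_evenDigits k) (exp_pos _).le (exp_neg_div_lt_one hθ (by positivity))

theorem mul_genFun_evenDigits_le (k : ℕ) {θ : ℝ} (hθ : 0 < θ) :
    (1 - exp (-θ / 10 ^ (2 * k + 1))) * genFun EvenDigits (exp (-θ / 10 ^ (2 * k + 1))) ≤
      θ / 10 + exp (-θ) := by
  set q := exp (-θ / 10 ^ (2 * k + 1))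
  have hq : q ^ 10 ^ (2 * k + 1) = exp (-θ) := by
    simpa using exp_div_natCast_pow (-θ) (N := 10 ^ (2 * k + 1)) (by positivity)
  have hgap : (1 - q) * 10 ^ (2 * k) ≤ θ / 10 := by
    have h1q : 1 - q ≤ θ / 10 ^ (2 * k + 1) := by
      have := one_sub_le_exp_neg (θ / 10 ^ (2 * k + 1))
      rw [← neg_div] at this
      linarith
    calc (1 - q) * 10 ^ (2 * k) ≤ θ / 10 ^ (2 * k + 1) * 10 ^ (2 * k) := by gcongr
      _ = θ / 10 := by field_simp; ring
  have := mul_genFun_le_of_disjoint (q := q) (Nat.pow_le_pow_right (by norm_num) (by omega))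
    (disjoint_evenDigits_Ico k) (exp_pos _).le (exp_neg_div_lt_one hθ (by positivity))
  push_cast at this
  linarith

theorem evenDigits_incomparable :
    ¬ GermLE EvenDigits EvenDigitsᶜ ∧ ¬ GermLE EvenDigitsᶜ EvenDigits := by
  constructor
  · intro h
    obtain ⟨k, hk⟩ := ((tendsto_exp_neg_div_nhdsLT (by norm_num : (0 : ℝ) < 1 / 5)
      tendsto_ten_pow_odd).eventually h.eventually_mul_genFun_le_half).exists
    have := exp_neg_sub_le_mul_genFun_evenDigits k (by norm_num : (0 : ℝ) < 1 / 5)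
    rw [show 10 * (1 / 5 : ℝ) = 2 by norm_num] at this
    linarith [exp_neg_two_le, one_sub_le_exp_neg (1 / 5)]
  · intro h
    obtain ⟨k, hk⟩ := ((tendsto_exp_neg_div_nhdsLT two_pos
      tendsto_ten_pow_odd).eventually h.eventually_half_le_mul_genFun).exists
    linarith [mul_genFun_evenDigits_le k two_pos, exp_neg_two_le]
end

section
/- Let P, P' be polynomials with nonnegative real coefficients and let A = q^a, A' = q^{a'} with a, a' ≥ 1. If P(q)/(1−A(q)) ≤ P'(q)/(1−A'(q)) for all q near 1⁻, then for all q near 1⁻: P/(1−A) ≤ (P + AP')/(1−AA') ≤ (P' + A'P)/(1−AA') ≤ P'/(1−A'). (Concatenation lemma: if c ⪯ c' then c ⪯ c:c' ⪯ c':c ⪯ c'.) -/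
/-- Germ-ordering at 1⁻ on real functions. -/
def GermLEF (f g : ℝ → ℝ) : Prop :=
  ∃ ε > (0 : ℝ), ∀ q ∈ Set.Ioo (1 - ε) (1 : ℝ), f q ≤ g q

theorem concatenation_lemma (P P' : Polynomial ℝ)
    (hP : ∀ n, 0 ≤ P.coeff n) (hP' : ∀ n, 0 ≤ P'.coeff n)
    (a a' : ℕ) (ha : 1 ≤ a) (ha' : 1 ≤ a')
    (h : GermLEF (fun q => P.eval q / (1 - q ^ a))
                 (fun q => P'.eval q / (1 - q ^ a'))) :
    GermLEF (fun q => P.eval q / (1 - q ^ a))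
            (fun q => (P.eval q + q ^ a * P'.eval q) / (1 - q ^ (a + a'))) ∧
    GermLEF (fun q => (P.eval q + q ^ a * P'.eval q) / (1 - q ^ (a + a')))
            (fun q => (P'.eval q + q ^ a' * P.eval q) / (1 - q ^ (a + a'))) ∧
    GermLEF (fun q => (P'.eval q + q ^ a' * P.eval q) / (1 - q ^ (a + a')))
            (fun q => P'.eval q / (1 - q ^ a')) := by
  obtain ⟨ε₀, hε₀, hh⟩ := h
  set ε := min ε₀ 1 with hεdef
  have hε : (0:ℝ) < ε := lt_min hε₀ one_pos
  have key : ∀ q ∈ Set.Ioo (1 - ε) (1:ℝ),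
      0 < q ∧ q < 1 ∧
      P.eval q * (1 - q ^ a') ≤ P'.eval q * (1 - q ^ a) := by
    intro q hq
    have hq1 : q < 1 := hq.2
    have hq0 : 0 < q := by
      have : (0:ℝ) ≤ 1 - ε := by
        have : ε ≤ 1 := min_le_right _ _
        linarith
      linarith [hq.1]
    refine ⟨hq0, hq1, ?_⟩
    have hqmem : q ∈ Set.Ioo (1 - ε₀) (1:ℝ) := by
      constructor
      · have : 1 - ε₀ ≤ 1 - ε := by
          have : ε ≤ ε₀ := min_le_left _ _
          linarith
        linarith [hq.1]
      · exact hq1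
    have hda : 0 < 1 - q ^ a := by
      have := pow_lt_one₀ hq0.le hq1 (by omega : a ≠ 0)
      linarith
    have hda' : 0 < 1 - q ^ a' := by
      have := pow_lt_one₀ hq0.le hq1 (by omega : a' ≠ 0)
      linarith
    exact (div_le_div_iff₀ hda hda').mp (hh q hqmem)
  have hpos : ∀ q ∈ Set.Ioo (1 - ε) (1:ℝ),
      0 < q ^ a ∧ 0 < q ^ a' ∧ 0 < 1 - q ^ a ∧ 0 < 1 - q ^ a' ∧
      0 < 1 - q ^ (a + a') := by
    intro q hq
    obtain ⟨hq0, hq1, _⟩ := key q hq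
    refine ⟨pow_pos hq0 _, pow_pos hq0 _, ?_, ?_, ?_⟩
    · have := pow_lt_one₀ hq0.le hq1 (by omega : a ≠ 0); linarith
    · have := pow_lt_one₀ hq0.le hq1 (by omega : a' ≠ 0); linarith
    · have := pow_lt_one₀ hq0.le hq1 (by omega : a + a' ≠ 0); linarith
  refine ⟨⟨ε, hε, ?_⟩, ⟨ε, hε, ?_⟩, ⟨ε, hε, ?_⟩⟩ <;> intro q hq <;>
    obtain ⟨hq0, hq1, K⟩ := key q hq <;>
    obtain ⟨hA, hA', hda, hda', hdaa⟩ := hpos q hq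
  · rw [div_le_div_iff₀ hda hdaa, pow_add]
    nlinarith [mul_le_mul_of_nonneg_left K hA.le]
  · rw [div_le_div_iff₀ hdaa hdaa]
    nlinarith [mul_pos hdaa hdaa]
  · rw [div_le_div_iff₀ hdaa hda', pow_add]
    nlinarith [mul_le_mul_of_nonneg_left K hA'.le]
end

section
/- With notation as in the concatenation lemma, if P/(1−A) < P'/(1−A') strictly in the germ-ordering (i.e., strict inequality holds on some interval (1−ε,1)), then all three intermediate inequalities P/(1−A) < (P+AP')/(1−AA') < (P'+A'P)/(1−AA') < P'/(1−A') are strict in the germ-ordering. -/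
/-- Strict germ-ordering at 1⁻ on real functions. -/
def GermLTF (f g : ℝ → ℝ) : Prop :=
  ∃ ε > (0 : ℝ), ∀ q ∈ Set.Ioo (1 - ε) (1 : ℝ), f q < g q

theorem concatenation_lemma_strict (P P' : Polynomial ℝ)
    (hP : ∀ n, 0 ≤ P.coeff n) (hP' : ∀ n, 0 ≤ P'.coeff n)
    (a a' : ℕ) (ha : 1 ≤ a) (ha' : 1 ≤ a')
    (h : GermLTF (fun q => P.eval q / (1 - q ^ a))
                 (fun q => P'.eval q / (1 - q ^ a'))) :
    GermLTF (fun q => P.eval q / (1 - q ^ a))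
            (fun q => (P.eval q + q ^ a * P'.eval q) / (1 - q ^ (a + a'))) ∧
    GermLTF (fun q => (P.eval q + q ^ a * P'.eval q) / (1 - q ^ (a + a')))
            (fun q => (P'.eval q + q ^ a' * P.eval q) / (1 - q ^ (a + a'))) ∧
    GermLTF (fun q => (P'.eval q + q ^ a' * P.eval q) / (1 - q ^ (a + a')))
            (fun q => P'.eval q / (1 - q ^ a')) := by
  obtain ⟨ε, hε, hlt⟩ := h
  set δ := min ε 1 with hδ
  have hδ0 : 0 < δ := lt_min hε one_pos
  have hδ1 : δ ≤ 1 := min_le_right _ _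
  have hδε : δ ≤ ε := min_le_left _ _
  have main : ∀ q ∈ Set.Ioo (1 - δ) (1 : ℝ),
      0 < 1 - q ^ a ∧ 0 < 1 - q ^ a' ∧ 0 < 1 - q ^ (a + a') ∧
      0 < q ^ a ∧ 0 < q ^ a' ∧
      P.eval q * (1 - q ^ a') < P'.eval q * (1 - q ^ a) := by
    intro q hq
    have hq1 : q < 1 := hq.2
    have hq0 : 0 < q := by
      have : 1 - δ < q := hq.1
      linarith
    have hAa : q ^ a < 1 := pow_lt_one₀ hq0.le hq1 (by omega)
    have hAa' : q ^ a' < 1 := pow_lt_one₀ hq0.le hq1 (by omega)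
    have hAaa : q ^ (a + a') < 1 := pow_lt_one₀ hq0.le hq1 (by omega)
    have hpa : 0 < q ^ a := pow_pos hq0 _
    have hpa' : 0 < q ^ a' := pow_pos hq0 _
    have h' := hlt q ⟨by linarith [hq.1], hq1⟩
    simp only at h'
    rw [div_lt_div_iff₀ (by linarith) (by linarith)] at h'
    exact ⟨by linarith, by linarith, by linarith, hpa, hpa', h'⟩
  refine ⟨⟨δ, hδ0, ?_⟩, ⟨δ, hδ0, ?_⟩, ⟨δ, hδ0, ?_⟩⟩ <;> intro q hq <;>
    obtain ⟨h1, h2, h3, h4, h5, h6⟩ := main q hq <;>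
    simp only <;> rw [div_lt_div_iff₀ (by linarith) (by linarith)] <;>
    rw [pow_add] at *
  · nlinarith [mul_lt_mul_of_pos_left h6 h4]
  · nlinarith [h6]
  · nlinarith [mul_lt_mul_of_pos_left h6 h5]
end

section
/- For every finite set D of positive integers, every D-avoiding subset of ℕ that is germ-maximal among D-avoiding sets is eventually periodic (equivalently, its generating function is a rational function). -/
/-- `S` is `D`-avoiding: no two elements of `S` differ by an element of `D`. -/
def DAvoiding (D : Finset ℕ) (S : Set ℕ) : Prop :=
  ∀ x ∈ S, ∀ d ∈ D, x + d ∉ S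

/-!
Read a set through the finite automaton whose state is the window of its last `max D` indicator
bits: the `D`-avoiding sets are the words that never write `true` in a state forbidding it. For
fixed `q ∈ (0, 1)` the value `∑ q ^ n` is maximised by a stationary greedy policy (Bellman
equation), and there are only finitely many policies. Policy words are eventually periodic, so
their generating functions are rational and any two of them compare in the same way for all `q`
close to `1`; hence one policy is optimal for all `q` close to `1` (Blackwell optimality). Its word
`B` is `D`-avoiding, eventually periodic and `S* ⪯ B`, so germ-maximality gives `B ⪯ S*` too. Then
`genFun S*` and `genFun B` agree on an interval, and the identity theorem for power series gives
`S* = B`.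
-/

open Filter Topology Set Polynomial

noncomputable def wordGenFun (w : ℕ → Bool) (q : ℝ) : ℝ := ∑' n, if w n then q ^ n else 0

noncomputable def prefixPoly (w : ℕ → Bool) (n : ℕ) : ℝ[X] :=
  ∑ k ∈ Finset.range n, if w k then X ^ k else 0

section WordGenFun

variable {w : ℕ → Bool} {q : ℝ}

lemma summable_wordGenFun (hq0 : 0 ≤ q) (hq1 : q < 1) :
    Summable fun n => if w n then q ^ n else 0 :=
  (summable_geometric_of_lt_one hq0 hq1).of_nonneg_of_le (fun n => by positivity)
    fun n => by split_ifs <;> simp [pow_nonneg hq0]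

lemma wordGenFun_le (hq0 : 0 ≤ q) (hq1 : q < 1) : wordGenFun w q ≤ (1 - q)⁻¹ := by
  rw [← tsum_geometric_of_lt_one hq0 hq1]
  exact (summable_wordGenFun hq0 hq1).tsum_le_tsum
    (fun n => by split_ifs <;> simp [pow_nonneg hq0]) (summable_geometric_of_lt_one hq0 hq1)

lemma eval_prefixPoly (w : ℕ → Bool) (n : ℕ) (q : ℝ) :
    (prefixPoly w n).eval q = ∑ k ∈ Finset.range n, if w k then q ^ k else 0 := by
  simp [prefixPoly, eval_finsetSum, apply_ite]

lemma wordGenFun_eq_eval_add (hq0 : 0 ≤ q) (hq1 : q < 1) (n : ℕ) :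
    wordGenFun w q = (prefixPoly w n).eval q + q ^ n * wordGenFun (fun k => w (n + k)) q := by
  rw [eval_prefixPoly, wordGenFun, ← (summable_wordGenFun hq0 hq1).sum_add_tsum_nat_add n,
    wordGenFun, ← tsum_mul_left]
  congr 1
  refine tsum_congr fun k => ?_
  rw [add_comm k n, pow_add]
  split_ifs <;> simp

lemma wordGenFun_eq_head_add (hq0 : 0 ≤ q) (hq1 : q < 1) :
    wordGenFun w q = (if w 0 then 1 else 0) + q * wordGenFun (fun k => w (k + 1)) q := by
  simpa [prefixPoly, apply_ite, add_comm] using wordGenFun_eq_eval_add (w := w) hq0 hq1 1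

lemma one_sub_pow_mul_wordGenFun_of_periodic (hq0 : 0 ≤ q) (hq1 : q < 1) {c : ℕ}
    (h : ∀ k, w (c + k) = w k) : (1 - q ^ c) * wordGenFun w q = (prefixPoly w c).eval q := by
  have := wordGenFun_eq_eval_add (w := w) hq0 hq1 c
  simp only [h] at this
  linear_combination this

lemma genFun_setOf (w : ℕ → Bool) (q : ℝ) : genFun {n | w n = true} q = wordGenFun w q := by
  rw [genFun, tsum_subtype]
  exact tsum_congr fun n => by by_cases hn : w n <;> simp [hn]

end WordGenFun

theorem exists_polynomial_eval_eq_of_eventuallyPeriodic {w : ℕ → Bool}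
    (h : EventuallyPeriodic {n | w n = true}) :
    ∃ c > 0, ∃ P : ℝ[X], ∀ q, 0 ≤ q → q < 1 → (1 - q ^ c) * wordGenFun w q = P.eval q := by
  obtain ⟨N, c, hc, hper⟩ := h
  have htail : ∀ k, w (N + (c + k)) = w (N + k) := fun k => by
    rw [show N + (c + k) = N + k + c by omega]
    exact Bool.eq_iff_iff.2 (hper (N + k) (by omega)).symm
  refine ⟨c, hc, (1 - X ^ c) * prefixPoly w N + X ^ N * prefixPoly (fun k => w (N + k)) c,
    fun q hq0 hq1 => ?_⟩
  have hperiodic := one_sub_pow_mul_wordGenFun_of_periodic (w := fun k => w (N + k)) hq0 hq1 htail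
  rw [wordGenFun_eq_eval_add hq0 hq1 N]
  simp only [eval_add, eval_mul, eval_sub, eval_one, eval_pow, eval_X]
  linear_combination q ^ N * hperiodic

theorem Polynomial.eventually_nonneg_or_eventually_neg (Q : ℝ[X]) (x : ℝ) :
    (∀ᶠ q in 𝓝[<] x, 0 ≤ Q.eval q) ∨ ∀ᶠ q in 𝓝[<] x, Q.eval q < 0 := by
  by_cases hQ : Q = 0
  · simp [hQ]
  have hne : ∀ᶠ q in 𝓝[<] x, Q.eval q ≠ 0 := by
    have : ∀ᶠ q in 𝓝[<] x, ∀ r ∈ Q.roots.toFinset, q ≠ r :=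
      (eventually_all_finset _).2 fun r _ => by
        rcases eq_or_ne x r with rfl | hr
        · exact eventually_mem_nhdsWithin.mono fun q hq => ne_of_lt hq
        · exact eventually_ne_nhdsWithin hr
    exact this.mono fun q hq hroot => hq q (by simpa [hQ] using hroot) rfl
  obtain ⟨a, ha, hsub⟩ := mem_nhdsLT_iff_exists_Ioo_subset.1 hne
  have hsign : ∀ q ∈ Ioo a x, ∀ q' ∈ Ioo a x, 0 < Q.eval q → 0 < Q.eval q' := by
    intro q hq q' hq' hpos
    by_contra hle
    obtain ⟨z, hz, hz0⟩ := isPreconnected_Ioo.intermediate_value hq' hq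
      Q.continuous.continuousOn ⟨not_lt.1 hle, hpos.le⟩
    exact hsub hz hz0
  by_cases h : ∃ q ∈ Ioo a x, 0 < Q.eval q
  · obtain ⟨q, hq, hpos⟩ := h
    left
    filter_upwards [Ioo_mem_nhdsLT ha] with q' hq' using (hsign q hq q' hq' hpos).le
  · push Not at h
    right
    filter_upwards [Ioo_mem_nhdsLT ha] with q' hq' using (h q' hq').lt_of_ne (hsub hq')

theorem eventually_le_or_eventually_lt_of_eventuallyPeriodic {w u : ℕ → Bool}
    (hw : EventuallyPeriodic {n | w n = true}) (hu : EventuallyPeriodic {n | u n = true}) :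
    (∀ᶠ q in 𝓝[<] 1, wordGenFun w q ≤ wordGenFun u q) ∨
      ∀ᶠ q in 𝓝[<] 1, wordGenFun u q < wordGenFun w q := by
  obtain ⟨c, hc, P, hP⟩ := exists_polynomial_eval_eq_of_eventuallyPeriodic hw
  obtain ⟨c', hc', P', hP'⟩ := exists_polynomial_eval_eq_of_eventuallyPeriodic hu
  set Q := P' * (1 - X ^ c) - P * (1 - X ^ c')
  have hQ : ∀ᶠ q in 𝓝[<] (1 : ℝ), 0 < (1 - q ^ c) * (1 - q ^ c') ∧
      Q.eval q = (1 - q ^ c) * (1 - q ^ c') * (wordGenFun u q - wordGenFun w q) := by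
    filter_upwards [Ioo_mem_nhdsLT zero_lt_one] with q ⟨hq0, hq1⟩
    refine ⟨mul_pos (sub_pos.2 (pow_lt_one₀ hq0.le hq1 hc.ne'))
      (sub_pos.2 (pow_lt_one₀ hq0.le hq1 hc'.ne')), ?_⟩
    simp only [Q, eval_sub, eval_mul, eval_one, eval_pow, eval_X, ← hP q hq0.le hq1,
      ← hP' q hq0.le hq1]
    ring
  refine (Q.eventually_nonneg_or_eventually_neg 1).imp (fun h => ?_) fun h => ?_
  · filter_upwards [h, hQ] with q hq ⟨hpos, heq⟩
    rw [heq] at hq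
    exact sub_nonneg.1 (nonneg_of_mul_nonneg_right hq hpos)
  · filter_upwards [h, hQ] with q hq ⟨hpos, heq⟩
    rw [heq] at hq
    exact sub_neg.1 (neg_of_mul_neg_right hq hpos.le)

open scoped ENNReal in
theorem hasFPowerSeriesOnBall_genFun (S : Set ℕ) :
    HasFPowerSeriesOnBall (genFun S)
      (.ofScalars ℝ (S.indicator 1) : FormalMultilinearSeries ℝ ℝ ℝ) 0 1 := by
  set p := FormalMultilinearSeries.ofScalars ℝ (S.indicator (1 : ℕ → ℝ))
  have hsum : p.sum = genFun S := funext fun q => by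
    rw [← FormalMultilinearSeries.ofScalarsSum, FormalMultilinearSeries.ofScalars_sum_eq, genFun,
      tsum_subtype]
    congr 1
    funext n
    by_cases hn : n ∈ S <;> simp [hn]
  have hradius : (1 : ℝ≥0∞) ≤ p.radius := by
    simpa using p.le_radius_of_bound 1 (r := 1) fun n => by
      by_cases hn : n ∈ S <;> simp [p, hn]
  simpa [hsum] using (p.hasFPowerSeriesOnBall (zero_lt_one.trans_le hradius)).mono one_pos hradius

theorem eq_of_eventually_genFun_eq {S S' : Set ℕ}
    (h : ∀ᶠ q in 𝓝[<] 1, genFun S q = genFun S' q) : S = S' := by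
  obtain ⟨a, ha, hsub⟩ := mem_nhdsLT_iff_exists_Ioo_subset.1 h
  set z := (max a 0 + 1) / 2
  have hz : z ∈ Ioo a 1 := ⟨by simp only [z]; linarith [le_max_left a 0, ha.out],
    by simp only [z]; linarith [max_lt ha.out one_pos]⟩
  have hball : z ∈ Metric.eball (0 : ℝ) 1 := by
    rw [← ENNReal.coe_one, Metric.eball_coe, Metric.mem_ball, dist_zero_right, Real.norm_eq_abs,
      abs_lt]
    constructor <;> simp only [z, NNReal.coe_one] <;>
      linarith [le_max_right a 0, max_lt ha.out one_pos]
  have hS := hasFPowerSeriesOnBall_genFun S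
  have hS' := hasFPowerSeriesOnBall_genFun S'
  have heq : EqOn (genFun S) (genFun S') (Metric.eball 0 1) :=
    hS.analyticOnNhd.eqOn_of_preconnected_of_eventuallyEq hS'.analyticOnNhd
      (by rw [← ENNReal.coe_one, Metric.eball_coe]; exact (convex_ball 0 1).isPreconnected) hball
      (Filter.mem_of_superset (Ioo_mem_nhds hz.1 hz.2) hsub)
  exact Set.indicator_one_inj ℝ <| FormalMultilinearSeries.ofScalars_series_injective ℝ ℝ
    (hS.hasFPowerSeriesAt.eq_formalMultilinearSeries_of_eventually hS'.hasFPowerSeriesAt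
      (Filter.mem_of_superset (Metric.eball_mem_nhds 0 one_pos) heq))

theorem germLE_iff {S S' : Set ℕ} :
    GermLE S S' ↔ ∀ᶠ q in 𝓝[<] 1, genFun S q ≤ genFun S' q := by
  rw [(nhdsLT_basis (1 : ℝ)).eventually_iff]
  constructor
  · rintro ⟨ε, hε, h⟩
    exact ⟨1 - ε, by linarith, h⟩
  · rintro ⟨a, ha, h⟩
    exact ⟨1 - a, by linarith, by simpa using h⟩

theorem GermLE.antisymm {S S' : Set ℕ} (h : GermLE S S') (h' : GermLE S' S) : S = S' :=
  eq_of_eventually_genFun_eq <| (germLE_iff.1 h).mp <| (germLE_iff.1 h').mono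
    fun _ h' h => le_antisymm h h'

theorem eq_zero_of_forall_eq_mul_comp {σ : Type*} [Finite σ] {f : σ → σ} {Δ : σ → ℝ} {q : ℝ}
    (hq0 : 0 ≤ q) (hq1 : q < 1) (h : ∀ t, Δ t = q * Δ (f t)) : Δ = 0 := by
  funext s
  have : Nonempty σ := ⟨s⟩
  obtain ⟨m, hm⟩ := Finite.exists_max fun t => |Δ t|
  have hle : |Δ m| ≤ q * |Δ m| :=
    calc |Δ m| = q * |Δ (f m)| := by rw [h m, abs_mul, abs_of_nonneg hq0]
      _ ≤ q * |Δ m| := mul_le_mul_of_nonneg_left (hm _) hq0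
  have hm0 : |Δ m| = 0 := le_antisymm (by nlinarith [abs_nonneg (Δ m)]) (abs_nonneg _)
  exact abs_eq_zero.1 (le_antisymm (hm0 ▸ hm s) (abs_nonneg _))

def consWord (b : Bool) (w : ℕ → Bool) : ℕ → Bool
  | 0 => b
  | k + 1 => w k

structure BitAutomaton (σ : Type*) where
  next : σ → Bool → σ
  allowsTrue : σ → Prop

namespace BitAutomaton

variable {σ : Type*} (A : BitAutomaton σ)

def run (s : σ) (w : ℕ → Bool) : ℕ → σ
  | 0 => s
  | k + 1 => A.next (run s w k) (w k)

def Admissible (s : σ) (w : ℕ → Bool) : Prop :=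
  ∀ k, w k = true → A.allowsTrue (A.run s w k)

def IsPolicy (π : σ → Bool) : Prop :=
  ∀ t, π t = true → A.allowsTrue t

def follow (π : σ → Bool) (t : σ) : σ := A.next t (π t)

def policyWord (π : σ → Bool) (s : σ) (k : ℕ) : Bool := π ((A.follow π)^[k] s)

noncomputable def optVal (s : σ) (q : ℝ) : ℝ :=
  ⨆ w : {w // A.Admissible s w}, wordGenFun w.1 q

variable {A}

lemma run_succ' (s : σ) (w : ℕ → Bool) (k : ℕ) :
    A.run s w (k + 1) = A.run (A.next s (w 0)) (fun j => w (j + 1)) k := by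
  induction k with
  | zero => rfl
  | succ k ih => exact congrArg (A.next · _) ih

lemma admissible_iff_head_tail {s : σ} {w : ℕ → Bool} :
    A.Admissible s w ↔
      (w 0 = true → A.allowsTrue s) ∧ A.Admissible (A.next s (w 0)) (fun j => w (j + 1)) := by
  refine ⟨fun h => ⟨h 0, fun k hk => run_succ' s w k ▸ h (k + 1) hk⟩, fun ⟨h0, h⟩ k => ?_⟩
  cases k with
  | zero => exact h0
  | succ k => exact fun hk => run_succ' s w k ▸ h k hk

lemma admissible_false (s : σ) : A.Admissible s fun _ => false :=
  fun _ h => Bool.false_ne_true h |>.elim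

lemma IsPolicy.admissible_policyWord {π : σ → Bool} (hπ : A.IsPolicy π) (s : σ) :
    A.Admissible s (A.policyWord π s) := by
  intro k
  induction k generalizing s with
  | zero => exact hπ s
  | succ k ih => rw [run_succ']; exact ih (A.follow π s)

instance (s : σ) : Nonempty {w // A.Admissible s w} := ⟨⟨_, admissible_false s⟩⟩

lemma wordGenFun_policyWord {q : ℝ} (hq0 : 0 ≤ q) (hq1 : q < 1) (π : σ → Bool) (s : σ) :
    wordGenFun (A.policyWord π s) q =
      (if π s then 1 else 0) + q * wordGenFun (A.policyWord π (A.follow π s)) q :=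
  wordGenFun_eq_head_add hq0 hq1

section OptVal

variable {q : ℝ} (hq0 : 0 < q) (hq1 : q < 1)
include hq0 hq1

lemma le_optVal {s : σ} {w : ℕ → Bool} (hw : A.Admissible s w) : wordGenFun w q ≤ A.optVal s q :=
  le_ciSup (f := fun w : {w // A.Admissible s w} => wordGenFun w.1 q)
    ⟨(1 - q)⁻¹, by rintro _ ⟨w, rfl⟩; exact wordGenFun_le hq0.le hq1⟩ ⟨w, hw⟩

lemma wordGenFun_le_head_add_optVal {s : σ} {w : ℕ → Bool} (hw : A.Admissible s w) :
    wordGenFun w q ≤ (if w 0 then 1 else 0) + q * A.optVal (A.next s (w 0)) q := by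
  rw [wordGenFun_eq_head_add hq0.le hq1]
  gcongr
  exact le_optVal hq0 hq1 (admissible_iff_head_tail.1 hw).2

lemma head_add_optVal_le {s : σ} {b : Bool} (hb : b = true → A.allowsTrue s) :
    (if b then 1 else 0) + q * A.optVal (A.next s b) q ≤ A.optVal s q := by
  rw [← le_sub_iff_add_le', ← le_div_iff₀' hq0]
  refine ciSup_le fun w => (le_div_iff₀' hq0).2 (le_sub_iff_add_le'.2 ?_)
  have hcons := le_optVal hq0 hq1 (w := consWord b w.1) (admissible_iff_head_tail.2 ⟨hb, w.2⟩)
  rwa [wordGenFun_eq_head_add hq0.le hq1] at hcons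

end OptVal

noncomputable def greedy (q : ℝ) (t : σ) : Bool :=
  haveI := Classical.propDecidable
  decide (A.allowsTrue t ∧ q * A.optVal (A.next t false) q ≤ 1 + q * A.optVal (A.next t true) q)

lemma greedy_eq_true_iff {q : ℝ} {t : σ} : A.greedy q t = true ↔
    A.allowsTrue t ∧ q * A.optVal (A.next t false) q ≤ 1 + q * A.optVal (A.next t true) q := by
  simp [greedy]

lemma isPolicy_greedy (q : ℝ) : A.IsPolicy (A.greedy q) :=
  fun _ h => (greedy_eq_true_iff.1 h).1

lemma head_add_optVal_le_greedy {q : ℝ} (s : σ) {b : Bool} (hb : b = true → A.allowsTrue s) :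
    (if b then 1 else 0) + q * A.optVal (A.next s b) q ≤
      (if A.greedy q s then 1 else 0) + q * A.optVal (A.next s (A.greedy q s)) q := by
  cases b <;> cases hg : A.greedy q s
  · rfl
  · simpa using (greedy_eq_true_iff.1 hg).2
  · have hlt : 1 + q * A.optVal (A.next s true) q < q * A.optVal (A.next s false) q :=
      not_le.1 fun hle => by simp [greedy_eq_true_iff.2 ⟨hb rfl, hle⟩] at hg
    simpa using hlt.le
  · rfl

lemma optVal_eq_greedy_step {q : ℝ} (hq0 : 0 < q) (hq1 : q < 1) (s : σ) :
    A.optVal s q = (if A.greedy q s then 1 else 0) + q * A.optVal (A.follow (A.greedy q) s) q :=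
  le_antisymm
    (ciSup_le fun w => (wordGenFun_le_head_add_optVal hq0 hq1 w.2).trans
      (head_add_optVal_le_greedy s ((admissible_iff_head_tail.1 w.2).1)))
    (head_add_optVal_le hq0 hq1 (A.isPolicy_greedy q s))

lemma optVal_eq_wordGenFun_greedy [Finite σ] {q : ℝ} (hq0 : 0 < q) (hq1 : q < 1) (s : σ) :
    A.optVal s q = wordGenFun (A.policyWord (A.greedy q) s) q := by
  have := congrFun (eq_zero_of_forall_eq_mul_comp (f := A.follow (A.greedy q))
    (Δ := fun t => A.optVal t q - wordGenFun (A.policyWord (A.greedy q) t) q) hq0.le hq1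
    fun t => ?_) s
  · exact sub_eq_zero.1 this
  · rw [optVal_eq_greedy_step hq0 hq1, wordGenFun_policyWord hq0.le hq1]
    ring

lemma wordGenFun_le_greedy [Finite σ] {q : ℝ} (hq0 : 0 < q) (hq1 : q < 1) {s : σ}
    {w : ℕ → Bool} (hw : A.Admissible s w) :
    wordGenFun w q ≤ wordGenFun (A.policyWord (A.greedy q) s) q :=
  optVal_eq_wordGenFun_greedy hq0 hq1 s ▸ le_optVal hq0 hq1 hw

lemma policyWord_eventuallyPeriodic [Finite σ] (π : σ → Bool) (s : σ) :
    EventuallyPeriodic {n | A.policyWord π s n = true} := by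
  obtain ⟨n, n', hne, heq⟩ := Finite.exists_ne_map_eq_of_infinite fun k => (A.follow π)^[k] s
  wlog hlt : n < n' generalizing n n'
  · exact this n' n hne.symm heq.symm (hne.lt_or_gt.resolve_left hlt)
  refine ⟨n, n' - n, by omega, fun k hk => ?_⟩
  obtain ⟨j, rfl⟩ := Nat.exists_eq_add_of_le hk
  show A.policyWord π s (n + j) = true ↔ A.policyWord π s (n + j + (n' - n)) = true
  rw [show n + j + (n' - n) = j + n' by omega, add_comm n j]
  simp only [policyWord, Function.iterate_add_apply, heq]

theorem exists_policy_eventually_optimal [Finite σ] (s : σ) :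
    ∃ π, A.IsPolicy π ∧ ∀ w, A.Admissible s w →
      ∀ᶠ q in 𝓝[<] 1, wordGenFun w q ≤ wordGenFun (A.policyWord π s) q := by
  set V : (σ → Bool) → ℝ → ℝ := fun π q => wordGenFun (A.policyWord π s) q
  -- near `1`, every comparison between the finitely many policy germs is visible pointwise
  have hcmp : ∀ᶠ q in 𝓝[<] (1 : ℝ), q ∈ Ioo 0 1 ∧ ∀ π π' : σ → Bool,
      ¬ (∀ᶠ r in 𝓝[<] 1, V π r ≤ V π' r) → V π' q < V π q :=
    Filter.Eventually.and (Ioo_mem_nhdsLT one_pos) <| eventually_all.2 fun π =>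
      eventually_all.2 fun π' => eventually_imp_distrib_left.2 fun h =>
        (eventually_le_or_eventually_lt_of_eventuallyPeriodic (A.policyWord_eventuallyPeriodic π s)
          (A.policyWord_eventuallyPeriodic π' s)).resolve_left h
  obtain ⟨q₁, ⟨hq₁0, hq₁1⟩, hq₁⟩ := hcmp.exists
  have hbest : ∀ π, A.IsPolicy π → ∀ᶠ r in 𝓝[<] 1, V π r ≤ V (A.greedy q₁) r := fun π hπ => by
    by_contra h
    exact (hq₁ π _ h).not_ge (wordGenFun_le_greedy hq₁0 hq₁1 (hπ.admissible_policyWord s))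
  refine ⟨A.greedy q₁, A.isPolicy_greedy q₁, fun w hw => ?_⟩
  filter_upwards [eventually_all.2 fun π => eventually_imp_distrib_left.2 (hbest π),
    Ioo_mem_nhdsLT one_pos] with r hr ⟨hr0, hr1⟩
  exact (wordGenFun_le_greedy hr0 hr1 hw).trans (hr _ (A.isPolicy_greedy r))

end BitAutomaton

def avoidAutomaton (D : Finset ℕ) : BitAutomaton (Fin (D.sup id + 1) → Bool) where
  next s b := Fin.cons b (Fin.init s)
  allowsTrue s := ∀ i : Fin (D.sup id + 1), (i : ℕ) + 1 ∈ D → s i = false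

lemma avoidAutomaton_run_apply_eq_true_iff (D : Finset ℕ) (w : ℕ → Bool) (k : ℕ)
    (i : Fin (D.sup id + 1)) :
    (avoidAutomaton D).run (fun _ => false) w k i = true ↔ ∃ j, j + (i + 1) = k ∧ w j = true := by
  induction k generalizing i with
  | zero => simp [BitAutomaton.run]
  | succ k ih =>
    induction i using Fin.cases with
    | zero => simp [BitAutomaton.run, avoidAutomaton]
    | succ i =>
      rw [show (avoidAutomaton D).run (fun _ => false) w (k + 1) i.succ =
        (avoidAutomaton D).run (fun _ => false) w k i.castSucc from rfl, ih]
      simp only [Fin.val_succ, Fin.val_castSucc]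
      exact exists_congr fun j => and_congr_left' (by omega)

theorem avoidAutomaton_admissible_iff {D : Finset ℕ} (hD : ∀ d ∈ D, 0 < d) {w : ℕ → Bool} :
    (avoidAutomaton D).Admissible (fun _ => false) w ↔ DAvoiding D {n | w n = true} := by
  constructor
  · intro h x hx d hd hxd
    have hd0 := hD d hd
    have hlt : d - 1 < D.sup id + 1 := by have : d ≤ D.sup id := Finset.le_sup (f := id) hd; omega
    have := h (x + d) hxd ⟨d - 1, hlt⟩ (by simpa [Nat.sub_add_cancel hd0] using hd)
    rw [← Bool.not_eq_true, avoidAutomaton_run_apply_eq_true_iff] at this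
    exact this ⟨x, by simp only; omega, hx⟩
  · intro h k hk i hi
    rw [← Bool.not_eq_true, avoidAutomaton_run_apply_eq_true_iff]
    rintro ⟨j, rfl, hj⟩
    exact h j hj _ hi hk

theorem germMaximal_avoiding_eventuallyPeriodic (D : Finset ℕ)
    (hD : ∀ d ∈ D, 0 < d) (Sstar : Set ℕ) (hS : DAvoiding D Sstar)
    (hmax : ¬ ∃ S : Set ℕ, DAvoiding D S ∧ GermLE Sstar S ∧ ¬ GermLE S Sstar) :
    EventuallyPeriodic Sstar := by
  classical
  obtain ⟨χ, rfl⟩ : ∃ χ : ℕ → Bool, Sstar = {n | χ n = true} :=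
    ⟨fun n => decide (n ∈ Sstar), by ext; simp⟩
  obtain ⟨π, hπ, hopt⟩ := (avoidAutomaton D).exists_policy_eventually_optimal fun _ => false
  set B := {n | (avoidAutomaton D).policyWord π (fun _ => false) n = true}
  have hB : DAvoiding D B := (avoidAutomaton_admissible_iff hD).1 (hπ.admissible_policyWord _)
  have hle : GermLE {n | χ n = true} B := germLE_iff.2 <| by
    simpa only [B, genFun_setOf] using hopt χ ((avoidAutomaton_admissible_iff hD).2 hS)
  have hge : GermLE B {n | χ n = true} := by_contra fun h => hmax ⟨B, hB, hle, h⟩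
  rw [hle.antisymm hge]
  exact (avoidAutomaton D).policyWord_eventuallyPeriodic π _
end

section
/- For every finite nonempty packing body B ⊆ ℕ, every germ-maximal translation set for B is eventually periodic. -/
/-- `T` is a translation set for `B`: the translates `B + n` (`n ∈ T`) are
pairwise disjoint. -/
def IsTranslationSet (B T : Set ℕ) : Prop :=
  ∀ m ∈ T, ∀ n ∈ T, m ≠ n →
    ((fun b => b + m) '' B) ∩ ((fun b => b + n) '' B) = ∅

open Filter Topology Polynomial

lemma Polynomial.eventually_nonneg_of_frequently_nonneg {H : ℝ[X]} {a : ℝ}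
    (h : ∃ᶠ q in 𝓝[<] a, 0 ≤ H.eval q) : ∀ᶠ q in 𝓝[<] a, 0 ≤ H.eval q := by
  rcases eq_or_ne H 0 with rfl | hH
  · simp
  have hroots : ∀ᶠ q in 𝓝[<] a, ¬ H.IsRoot q :=
    (nhdsWithin_mono a fun _ hq => ne_of_lt hq).trans (nhdsNE_le_cofinite a)
      (finite_setOfPred_isRoot hH).compl_mem_cofinite
  obtain ⟨c, hca, hc⟩ := (nhdsLT_basis a).eventually_iff.1 hroots
  obtain ⟨q₀, hq₀, hq₀c⟩ := (h.and_eventually (Ioo_mem_nhdsLT hca)).exists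
  filter_upwards [Ioo_mem_nhdsLT hca] with q hq
  by_contra! hneg
  obtain ⟨r, hr, hr0⟩ := isPreconnected_Ioo.intermediate_value hq hq₀c H.continuousOn
    ⟨hneg.le, hq₀⟩
  exact hc hr hr0

namespace BinaryWord

noncomputable def value (x : ℕ → Bool) (q : ℝ) : ℝ := ∑' n, if x n then q ^ n else 0

noncomputable def prefixPoly (x : ℕ → Bool) (N : ℕ) : ℝ[X] :=
  ∑ n ∈ Finset.range N, if x n then X ^ n else 0

variable {x y : ℕ → Bool} {q : ℝ}

lemma summable_value (x : ℕ → Bool) (hq : |q| < 1) :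
    Summable fun n => if x n then q ^ n else 0 :=
  (summable_geometric_of_lt_one (abs_nonneg q) hq).of_norm_bounded fun n => by
    split_ifs <;> simp

lemma continuous_value (hq : |q| < 1) : Continuous fun x : ℕ → Bool => value x q :=
  continuous_tsum (fun n => (continuous_of_discreteTopology (f := fun b : Bool =>
      if b then q ^ n else 0)).comp (continuous_apply n))
    (summable_geometric_of_lt_one (abs_nonneg q) hq) fun n x => by split_ifs <;> simp

lemma eval_prefixPoly (x : ℕ → Bool) (N : ℕ) (q : ℝ) :
    (prefixPoly x N).eval q = ∑ n ∈ Finset.range N, if x n then q ^ n else 0 := by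
  simp [prefixPoly, eval_finsetSum, apply_ite (eval q)]

lemma prefixPoly_congr {N : ℕ} (h : ∀ n < N, x n = y n) : prefixPoly x N = prefixPoly y N :=
  Finset.sum_congr rfl fun n hn => by rw [h n (Finset.mem_range.1 hn)]

lemma value_eq_eval_add (hq : |q| < 1) (N : ℕ) :
    value x q = (prefixPoly x N).eval q + q ^ N * value (x ∘ (· + N)) q := by
  rw [value, eval_prefixPoly, ← (summable_value x hq).sum_add_tsum_nat_add N, value,
    ← tsum_mul_left]
  congr 1
  refine tsum_congr fun n => ?_
  simp only [Function.comp_apply]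
  split_ifs <;> ring

lemma value_mul_one_sub_pow {a p : ℕ} (hq : |q| < 1) (hx : Function.Periodic (x ∘ (· + a)) p) :
    value x q * (1 - q ^ p) = (prefixPoly x (a + p) - X ^ p * prefixPoly x a).eval q := by
  have htail : x ∘ (· + (a + p)) = x ∘ (· + a) := by
    funext n; simpa [add_assoc, add_comm a p] using hx n
  have h₁ := value_eq_eval_add (x := x) hq a
  have h₂ := value_eq_eval_add (x := x) hq (a + p)
  rw [htail] at h₂
  rw [eval_sub, eval_mul, eval_pow, eval_X]
  linear_combination h₂ - q ^ p * h₁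

lemma hasFPowerSeriesOnBall_value (x : ℕ → Bool) :
    HasFPowerSeriesOnBall (value x) (.ofScalars ℝ fun n => if x n then (1 : ℝ) else 0) 0 1 := by
  set p := FormalMultilinearSeries.ofScalars ℝ fun n => if x n then (1 : ℝ) else 0
  have hr : 1 ≤ p.radius :=
    p.le_radius_of_bound 1 fun n => by
      rw [FormalMultilinearSeries.ofScalars_norm]
      split_ifs <;> simp
  refine (p.hasFPowerSeriesOnBall (zero_lt_one.trans_le hr)).mono zero_lt_one hr |>.congr ?_
  intro q _
  simp only [p, FormalMultilinearSeries.sum, FormalMultilinearSeries.ofScalars_apply_eq, value]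
  exact tsum_congr fun n => by split_ifs <;> simp

lemma eq_of_eventually_value_eq (h : ∀ᶠ q in 𝓝[<] 1, value x q = value y q) : x = y := by
  have hx := hasFPowerSeriesOnBall_value x
  have hy := hasFPowerSeriesOnBall_value y
  obtain ⟨c, hc, hcx⟩ := (mem_nhdsLT_iff_exists_mem_Ico_Ioo_subset zero_lt_one).1 h
  have hball : Metric.eball (0 : ℝ) 1 = Metric.ball 0 1 := by
    simpa using Metric.eball_coe (x := (0 : ℝ)) (ε := 1)
  have hU : IsPreconnected (Metric.eball (0 : ℝ) 1) := hball ▸ (convex_ball 0 1).isPreconnected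
  have hz : (c + 1) / 2 ∈ Metric.eball (0 : ℝ) 1 := by
    rw [hball, Metric.mem_ball, dist_zero_right, Real.norm_eq_abs, abs_lt]
    constructor <;> linarith [hc.1, hc.2]
  have hEq := hx.analyticOnNhd.eqOn_of_preconnected_of_eventuallyEq hy.analyticOnNhd hU hz
    (eventually_of_mem (Ioo_mem_nhds (by linarith [hc.2]) (by linarith [hc.2])) hcx)
  have hcoeff := hx.hasFPowerSeriesAt.eq_formalMultilinearSeries_of_eventually hy.hasFPowerSeriesAt
    (eventually_of_mem (Metric.isOpen_eball.mem_nhds (by simp)) hEq)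
  funext n
  have := congrFun (FormalMultilinearSeries.ofScalars_series_injective ℝ ℝ hcoeff) n
  cases hxn : x n <;> cases hyn : y n <;> simp_all

lemma genFun_setOf (x : ℕ → Bool) (q : ℝ) : genFun {n | x n} q = value x q := by
  rw [genFun, tsum_subtype {n | x n} (q ^ ·), value]
  exact tsum_congr fun n => by simp [Set.indicator_apply]

lemma germLE_setOf_iff :
    GermLE {n | x n} {n | y n} ↔ ∀ᶠ q in 𝓝[<] 1, value x q ≤ value y q := by
  simp only [GermLE, genFun_setOf, (nhdsLT_basis (1 : ℝ)).eventually_iff]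
  constructor
  · rintro ⟨ε, hε, h⟩
    exact ⟨1 - ε, by linarith, h⟩
  · rintro ⟨c, hc, h⟩
    exact ⟨1 - c, by linarith, by simpa using h⟩

def boundedPeriodicWords (K : ℕ) : Set (ℕ → Bool) :=
  ⋃ a ∈ Set.Iic K, ⋃ p ∈ Set.Icc 1 K, {w | Function.Periodic (w ∘ (· + a)) p}

lemma finite_setOf_periodic (a : ℕ) {p : ℕ} (hp : 0 < p) :
    {w : ℕ → Bool | Function.Periodic (w ∘ (· + a)) p}.Finite := by
  refine Set.Finite.of_finite_image (f := fun w (i : Fin (a + p)) => w i) (Set.toFinite _)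
    fun w hw v hv hwv => funext fun n => ?_
  induction n using Nat.strong_induction_on with
  | _ n ih =>
    by_cases hn : n < a + p
    · exact congrFun hwv ⟨n, hn⟩
    · have hw' := hw (n - p - a)
      have hv' := hv (n - p - a)
      simp only [Function.comp_apply, show n - p - a + p + a = n by omega,
        show n - p - a + a = n - p by omega] at hw' hv'
      rw [hw', hv', ih _ (by omega)]

lemma finite_boundedPeriodicWords (K : ℕ) : (boundedPeriodicWords K).Finite :=
  (Set.finite_Iic K).biUnion fun a _ =>
    (Set.finite_Icc 1 K).biUnion fun _ hp => finite_setOf_periodic a hp.1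

lemma eventuallyPeriodic_of_mem_boundedPeriodicWords {K : ℕ} (hx : x ∈ boundedPeriodicWords K) :
    EventuallyPeriodic {n | x n} := by
  simp only [boundedPeriodicWords, Set.mem_iUnion] at hx
  obtain ⟨a, -, p, hp, hxp⟩ := hx
  refine ⟨a, p, hp.1, fun n hn => ?_⟩
  have := hxp (n - a)
  simp only [Function.comp_apply, show n - a + p + a = n + p by omega,
    show n - a + a = n by omega] at this
  simp [this]

lemma eventually_value_le_of_frequently {K : ℕ} (hx : x ∈ boundedPeriodicWords K)
    (hy : y ∈ boundedPeriodicWords K) (h : ∃ᶠ q in 𝓝[<] 1, value x q ≤ value y q) :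
    ∀ᶠ q in 𝓝[<] 1, value x q ≤ value y q := by
  simp only [boundedPeriodicWords, Set.mem_iUnion] at hx hy
  obtain ⟨a, -, p, ⟨hp, -⟩, hxp⟩ := hx
  obtain ⟨b, -, r, ⟨hr, -⟩, hyr⟩ := hy
  set G := prefixPoly x (a + p) - X ^ p * prefixPoly x a
  set H := prefixPoly y (b + r) - X ^ r * prefixPoly y b
  have key : ∀ q ∈ Set.Ioo (0 : ℝ) 1,
      (value x q ≤ value y q ↔ 0 ≤ (H * (1 - X ^ p) - G * (1 - X ^ r)).eval q) := by
    rintro q ⟨hq0, hq1⟩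
    have hq : |q| < 1 := abs_lt.2 ⟨by linarith, hq1⟩
    have hpos : 0 < (1 - q ^ p) * (1 - q ^ r) :=
      mul_pos (sub_pos.2 (pow_lt_one₀ hq0.le hq1 (by omega)))
        (sub_pos.2 (pow_lt_one₀ hq0.le hq1 (by omega)))
    have : (H * (1 - X ^ p) - G * (1 - X ^ r)).eval q =
        (value y q - value x q) * ((1 - q ^ p) * (1 - q ^ r)) := by
      simp only [eval_sub, eval_mul, eval_one, eval_pow, eval_X, G, H,
        ← value_mul_one_sub_pow hq hxp, ← value_mul_one_sub_pow hq hyr]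
      ring
    rw [this, mul_nonneg_iff_of_pos_right hpos, sub_nonneg]
  have hunit : Set.Ioo (0 : ℝ) 1 ∈ 𝓝[<] 1 := Ioo_mem_nhdsLT zero_lt_one
  filter_upwards [Polynomial.eventually_nonneg_of_frequently_nonneg
    ((h.and_eventually hunit).mono fun q hq => (key q hq.2).1 hq.1), hunit] with q hq hq'
  exact (key q hq').2 hq

def window {L : ℕ} (x : ℕ → Bool) (n : ℕ) : Fin L → Bool := fun i => x (n + i)

def shiftOfFiniteType {L : ℕ} (A : Set (Fin L → Bool)) : Set (ℕ → Bool) :=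
  {x | ∀ n, window x n ∈ A}

section ShiftOfFiniteType

variable {L : ℕ} {A : Set (Fin L → Bool)} {a b p : ℕ}

lemma isCompact_shiftOfFiniteType : IsCompact (shiftOfFiniteType A) := by
  have hwin (n : ℕ) : Continuous fun x : ℕ → Bool => (window x n : Fin L → Bool) :=
    continuous_pi fun i => continuous_apply _
  rw [shiftOfFiniteType, Set.ofPred_forall]
  exact (isClosed_iInter fun n => (isClosed_discrete A).preimage (hwin n)).isCompact

lemma mem_shiftOfFiniteType_of_forall_window (hx : x ∈ shiftOfFiniteType A)
    (h : ∀ n, ∃ m, window (L := L) y n = window x m) : y ∈ shiftOfFiniteType A := fun n => by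
  obtain ⟨m, hm⟩ := h n
  exact hm ▸ hx m

def splice (x : ℕ → Bool) (a b : ℕ) : ℕ → Bool := fun n => if n < a then x n else x (n - a + b)

lemma window_splice (hab : window (L := L) x a = window x b) (n : ℕ) :
    ∃ m, window (L := L) (splice x a b) n = window x m := by
  by_cases hn : a ≤ n
  · refine ⟨n - a + b, funext fun i => ?_⟩
    simp only [window, splice, show ¬ n + i < a by omega, if_false]
    congr 1; omega
  · refine ⟨n, funext fun i => ?_⟩
    simp only [window, splice]
    split_ifs with h
    · rfl
    · have := congrFun hab ⟨n + i - a, by omega⟩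
      simp only [window] at this
      rw [show n + i - a + b = b + (n + i - a) by omega, ← this]
      congr 1; omega

lemma value_splice (hq : |q| < 1) :
    value (splice x a b) q = (prefixPoly x a).eval q + q ^ a * value (x ∘ (· + b)) q := by
  rw [value_eq_eval_add hq a, prefixPoly_congr (x := splice x a b) (y := x) fun n hn => if_pos hn]
  congr 3
  funext n
  simp [splice]

lemma value_tail_le_of_isMaxOn (hx : x ∈ shiftOfFiniteType A)
    (hmax : IsMaxOn (value · q) (shiftOfFiniteType A) x) (hq0 : 0 < q) (hq1 : q < 1)
    (hab : window (L := L) x a = window x b) :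
    value (x ∘ (· + b)) q ≤ value (x ∘ (· + a)) q := by
  have hq : |q| < 1 := abs_lt.2 ⟨by linarith, hq1⟩
  have h := isMaxOn_iff.1 hmax _ (mem_shiftOfFiniteType_of_forall_window hx (window_splice hab))
  rw [value_splice hq, value_eq_eval_add (x := x) hq a] at h
  exact le_of_mul_le_mul_left (by linarith) (pow_pos hq0 a)

def periodize (x : ℕ → Bool) (a p : ℕ) : ℕ → Bool :=
  fun n => if n < a then x n else x (a + (n - a) % p)

lemma periodic_periodize (x : ℕ → Bool) (a p : ℕ) :
    Function.Periodic (periodize x a p ∘ (· + a)) p := fun n => by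
  simp only [Function.comp_apply, periodize, show ¬ n + p + a < a by omega,
    show ¬ n + a < a by omega, if_false, Nat.add_sub_cancel, Nat.add_mod_right]

lemma periodize_eq_of_lt (hwin : window (L := L) x a = window x (a + p)) (hLp : L ≤ p) {n : ℕ}
    (hn : n < a + p + L) : periodize x a p n = x n := by
  unfold periodize
  split_ifs with h
  · rfl
  by_cases hn' : n < a + p
  · rw [Nat.mod_eq_of_lt (by omega), Nat.add_sub_cancel' (by omega)]
  · have := congrFun hwin ⟨n - a - p, by omega⟩
    simp only [window] at this
    rw [show n - a = n - a - p + p by omega, Nat.add_mod_right, Nat.mod_eq_of_lt (by omega), this]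
    congr 1; omega

lemma window_periodize (hwin : window (L := L) x a = window x (a + p)) (hLp : L < p) (n : ℕ) :
    ∃ m, window (L := L) (periodize x a p) n = window x m := by
  by_cases hn : n < a
  · exact ⟨n, funext fun i => periodize_eq_of_lt hwin hLp.le (by omega)⟩
  · refine ⟨a + (n - a) % p, funext fun i => ?_⟩
    have hmod := Nat.mod_lt (n - a) (show 0 < p by omega)
    change periodize x a p (n + i) = x (a + (n - a) % p + i)
    rw [← periodize_eq_of_lt hwin hLp.le (by omega)]
    simp only [periodize, show ¬ n + i < a by omega, show ¬ a + (n - a) % p + i < a by omega,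
      if_false]
    congr 2
    rw [show a + (n - a) % p + i - a = (n - a) % p + i by omega, Nat.mod_add_mod]
    congr 1; omega

lemma value_le_value_periodize (hx : x ∈ shiftOfFiniteType A)
    (hmax : IsMaxOn (value · q) (shiftOfFiniteType A) x) (hq0 : 0 < q) (hq1 : q < 1)
    (hwin : window (L := L) x a = window x (a + p)) (hLp : L < p) :
    value x q ≤ value (periodize x a p) q := by
  have hq : |q| < 1 := abs_lt.2 ⟨by linarith, hq1⟩
  set u := periodize x a p ∘ (· + a)
  have hu : value u q = (prefixPoly (x ∘ (· + a)) p).eval q + q ^ p * value u q := by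
    have hper : u ∘ (· + p) = u := funext (periodic_periodize x a p)
    conv_lhs => rw [value_eq_eval_add hq p, hper]
    rw [prefixPoly_congr (x := u) (y := x ∘ (· + a)) fun n hn =>
      periodize_eq_of_lt hwin hLp.le (show n + a < _ by omega)]
  have hT : value (x ∘ (· + a)) q ≤
      (prefixPoly (x ∘ (· + a)) p).eval q + q ^ p * value (x ∘ (· + a)) q := by
    have hshift : (x ∘ (· + a)) ∘ (· + p) = x ∘ (· + (a + p)) := by
      funext n; simp only [Function.comp_apply]; congr 1; omega
    have htail := value_tail_le_of_isMaxOn hx hmax hq0 hq1 hwin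
    calc value (x ∘ (· + a)) q
        = (prefixPoly (x ∘ (· + a)) p).eval q + q ^ p * value (x ∘ (· + (a + p))) q := by
          rw [← hshift]; exact value_eq_eval_add hq p
      _ ≤ _ := by gcongr
  have hTu : value (x ∘ (· + a)) q ≤ value u q := by
    have : 0 < 1 - q ^ p := sub_pos.2 (pow_lt_one₀ hq0.le hq1 (by omega))
    nlinarith
  rw [value_eq_eval_add (x := x) hq a, value_eq_eval_add (x := periodize x a p) hq a,
    prefixPoly_congr (x := periodize x a p) (y := x) fun n hn => if_pos hn]
  gcongr

/-- Sampling windows at multiples of `L + 1` makes the period exceed the window length. -/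
lemma exists_window_eq (x : ℕ → Bool) (L : ℕ) :
    ∃ a p, a ≤ 2 ^ L * (L + 1) ∧ L < p ∧ p ≤ 2 ^ L * (L + 1) ∧
      window (L := L) x a = window x (a + p) := by
  obtain ⟨i, j, hij, heq⟩ := Fintype.exists_ne_map_eq_of_card_lt
    (fun k : Fin (2 ^ L + 1) => (window x (k * (L + 1)) : Fin L → Bool)) (by simp)
  wlog hlt : i < j generalizing i j
  · exact this j i hij.symm heq.symm (lt_of_le_of_ne (not_lt.1 hlt) hij.symm)
  have hj := j.is_lt
  refine ⟨i * (L + 1), (j - i) * (L + 1), by gcongr; omega, ?_, by gcongr; omega, ?_⟩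
  · nlinarith [Nat.sub_pos_of_lt (Fin.lt_def.1 hlt)]
  · rwa [← Nat.add_mul, Nat.add_sub_cancel' (Fin.le_def.1 hlt.le)]

lemma exists_periodic_isMaxOn (hne : (shiftOfFiniteType A).Nonempty) (hq0 : 0 < q) (hq1 : q < 1) :
    ∃ w ∈ shiftOfFiniteType A ∩ boundedPeriodicWords (2 ^ L * (L + 1)),
      IsMaxOn (value · q) (shiftOfFiniteType A) w := by
  obtain ⟨x, hx, hmax⟩ := isCompact_shiftOfFiniteType.exists_isMaxOn hne
    (continuous_value (abs_lt.2 ⟨by linarith, hq1⟩)).continuousOn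
  obtain ⟨a, p, ha, hLp, hp, hwin⟩ := exists_window_eq x L
  refine ⟨periodize x a p, ⟨mem_shiftOfFiniteType_of_forall_window hx (window_periodize hwin hLp),
    ?_⟩, isMaxOn_iff.2 fun y hy =>
      (isMaxOn_iff.1 hmax y hy).trans (value_le_value_periodize hx hmax hq0 hq1 hwin hLp)⟩
  simp only [boundedPeriodicWords, Set.mem_iUnion]
  exact ⟨a, ha, p, ⟨by omega, hp⟩, periodic_periodize x a p⟩

theorem exists_periodic_eventually_value_le (hne : (shiftOfFiniteType A).Nonempty) :
    ∃ w ∈ shiftOfFiniteType A ∩ boundedPeriodicWords (2 ^ L * (L + 1)),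
      ∀ x ∈ shiftOfFiniteType A, ∀ᶠ q in 𝓝[<] 1, value x q ≤ value w q := by
  set P := shiftOfFiniteType A ∩ boundedPeriodicWords (2 ^ L * (L + 1))
  have hPfin : P.Finite := (finite_boundedPeriodicWords _).inter_of_right _
  have hopt : ∀ᶠ q in 𝓝[<] 1, ∃ w ∈ P, IsMaxOn (value · q) (shiftOfFiniteType A) w :=
    mem_of_superset (Ioo_mem_nhdsLT zero_lt_one) fun q hq => exists_periodic_isMaxOn hne hq.1 hq.2
  obtain ⟨w, hwP, hw⟩ :
      ∃ w ∈ P, ∃ᶠ q in 𝓝[<] 1, IsMaxOn (value · q) (shiftOfFiniteType A) w := by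
    by_contra! h
    obtain ⟨q, ⟨v, hv, hvq⟩, hq⟩ := (hopt.and ((eventually_all_finite hPfin).2 h)).exists
    exact hq v hv hvq
  have hdom : ∀ᶠ q in 𝓝[<] 1, ∀ v ∈ P, value v q ≤ value w q :=
    (eventually_all_finite hPfin).2 fun v hv => eventually_value_le_of_frequently hv.2 hwP.2
      (hw.mono fun q hq => isMaxOn_iff.1 hq v hv.1)
  refine ⟨w, hwP, fun x hx => ?_⟩
  filter_upwards [hopt, hdom] with q ⟨v, hvP, hv⟩ hq
  exact (isMaxOn_iff.1 hv x hx).trans (hq v hvP)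

end ShiftOfFiniteType

def translationWindows (B : Set ℕ) (L : ℕ) : Set (Fin L → Bool) :=
  {u | ∀ i j, u i → u j → i ≠ j → ∀ b ∈ B, ∀ b' ∈ B, b + i ≠ b' + j}

lemma isTranslationSet_iff_mem_shiftOfFiniteType {B : Set ℕ} {L : ℕ} (hL : ∀ b ∈ B, b < L)
    (x : ℕ → Bool) :
    IsTranslationSet B {n | x n} ↔ x ∈ shiftOfFiniteType (translationWindows B L) := by
  constructor
  · intro hT n i j hi hj hij b hb b' hb' heq
    have hdisj := hT (n + i) hi (n + j) hj (by simpa [Fin.ext_iff] using hij)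
    exact (Set.eq_empty_iff_forall_notMem.1 hdisj) (b + (n + i))
      ⟨⟨b, hb, rfl⟩, ⟨b', hb', show b' + (n + j) = b + (n + i) by omega⟩⟩
  · rintro hx m hm n hn hmn
    refine Set.eq_empty_iff_forall_notMem.2 ?_
    rintro _ ⟨⟨b, hb, rfl⟩, ⟨b', hb', heq⟩⟩
    dsimp only at heq
    have := hL b hb
    have := hL b' hb'
    refine hx (min m n) ⟨m - min m n, by omega⟩ ⟨n - min m n, by omega⟩ ?_ ?_ ?_ b hb b' hb' ?_
    · simpa [window, show min m n + (m - min m n) = m by omega] using hm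
    · simpa [window, show min m n + (n - min m n) = n by omega] using hn
    · simp [Fin.ext_iff]; omega
    · simp only; omega

end BinaryWord

open BinaryWord

theorem germMaximal_translationSet_eventuallyPeriodic_general (B : Set ℕ)
    (hB : B.Finite) (Tstar : Set ℕ)
    (hT : IsTranslationSet B Tstar)
    (hmax : ¬ ∃ T : Set ℕ, IsTranslationSet B T ∧ GermLE Tstar T ∧ ¬ GermLE T Tstar) :
    EventuallyPeriodic Tstar := by
  obtain ⟨x, rfl⟩ : ∃ x : ℕ → Bool, {n | x n} = Tstar :=
    ⟨fun n => by classical exact decide (n ∈ Tstar), by simp⟩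
  obtain ⟨L, hL⟩ := hB.bddAbove
  have hX := isTranslationSet_iff_mem_shiftOfFiniteType (L := L + 1) fun b hb =>
    Nat.lt_succ_of_le (hL hb)
  obtain ⟨w, ⟨hwX, hwper⟩, hwopt⟩ := exists_periodic_eventually_value_le ⟨x, (hX x).1 hT⟩
  have hle : GermLE {n | x n} {n | w n} := germLE_setOf_iff.2 (hwopt x ((hX x).1 hT))
  have hge : GermLE {n | w n} {n | x n} := by_contra fun h => hmax ⟨_, (hX w).2 hwX, hle, h⟩
  have hxw : x = w := eq_of_eventually_value_eq <|
    ((germLE_setOf_iff.1 hle).and (germLE_setOf_iff.1 hge)).mono fun _ h => le_antisymm h.1 h.2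
  exact hxw ▸ eventuallyPeriodic_of_mem_boundedPeriodicWords hwper

theorem germMaximal_translationSet_eventuallyPeriodic (B : Set ℕ)
    (hB : B.Finite) (hBne : B.Nonempty) (Tstar : Set ℕ)
    (hT : IsTranslationSet B Tstar)
    (hmax : ¬ ∃ T : Set ℕ, IsTranslationSet B T ∧ GermLE Tstar T ∧ ¬ GermLE T Tstar) :
    EventuallyPeriodic Tstar :=
  germMaximal_translationSet_eventuallyPeriodic_general B hB Tstar hT hmax
end

section
/- Let k ≥ 2 and D = {1,...,k−1}, and let S* = kℕ = {0, k, 2k, ...}. For every D-avoiding set S ⊆ ℕ with S ≠ S*, there is an efficiency gap: limsup_{q→1⁻} (S_q − (S*)_q) ≤ −1/k; i.e., S_q ⪯ (S*)_q − 1/k + O(1−q) in the germ-ordering. -/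
/-!
A `k`-separated set `S ≠ kℕ` agrees with `kℕ` below some multiple `m` of `k` and misses `m`
itself. Beyond that point `kℕ` contributes `q^m / (1 - q^k)`, while the remaining elements of `S`
are `k`-separated and at least `m + 1`, so they contribute at most `q^(m+1) / (1 - q^k)`. The gap
`q^m (1 - q) / (1 - q^k)` tends to `1/k`, and Bernoulli's inequality makes the error `O(1 - q)`.
-/

theorem DAvoiding.add_le_of_lt {k : ℕ} {S : Set ℕ} (hS : DAvoiding (Finset.Icc 1 (k - 1)) S)
    {x y : ℕ} (hx : x ∈ S) (hy : y ∈ S) (hxy : x < y) : x + k ≤ y := by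
  by_contra! h
  exact hS x hx (y - x) (by simp only [Finset.mem_Icc]; omega)
    (by rwa [Nat.add_sub_cancel' hxy.le])

section Separated

variable {k : ℕ} (hk : 0 < k) {S : Set ℕ} (hS : ∀ x ∈ S, ∀ y ∈ S, x < y → x + k ≤ y)
include hk hS

theorem dvd_of_mem_of_mul_div_mem {x : ℕ} (hx : x ∈ S) (hkx : k * (x / k) ∈ S) : k ∣ x := by
  by_contra hdvd
  have hgap := hS _ hkx _ hx (Nat.mul_div_lt_iff_not_dvd.mpr hdvd)
  have hlt : x < k * (x / k) + k := Nat.mul_succ k _ ▸ Nat.lt_mul_div_succ x hk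
  omega

theorem exists_eq_multiples_below (hne : S ≠ {n | k ∣ n}) :
    ∃ m, k ∣ m ∧ {n | k ∣ n ∧ n < m} ⊆ S ∧ ∀ x ∈ S, x ≤ m → k ∣ x ∧ x < m := by
  classical
  have hex : ∃ i, k * i ∉ S := by
    by_contra! h
    refine hne (Set.ext fun x ↦ ⟨fun hx ↦ dvd_of_mem_of_mul_div_mem hk hS hx (h _), ?_⟩)
    rintro ⟨i, rfl⟩
    exact h i
  refine ⟨k * Nat.find hex, dvd_mul_right _ _, ?_, fun x hx hxm ↦ ?_⟩
  · rintro _ ⟨⟨j, rfl⟩, hj⟩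
    exact not_not.mp (Nat.find_min hex (Nat.lt_of_mul_lt_mul_left hj))
  · have hlt : x < k * Nat.find hex :=
      hxm.lt_of_ne fun h ↦ Nat.find_spec hex (h ▸ hx)
    refine ⟨dvd_of_mem_of_mul_div_mem hk hS hx ?_, hlt⟩
    exact not_not.mp (Nat.find_min hex (Nat.div_lt_of_lt_mul hlt))

end Separated

theorem setOf_dvd_eq_union {k m : ℕ} (hkm : k ∣ m) :
    {n | k ∣ n} = {n | k ∣ n ∧ n < m} ∪ Set.range fun j ↦ m + k * j := by
  ext n
  simp only [Set.mem_ofPred_eq, Set.mem_union, Set.mem_range]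
  constructor
  · intro hn
    rcases lt_or_ge n m with hnm | hmn
    · exact Or.inl ⟨hn, hnm⟩
    · obtain ⟨j, hj⟩ := Nat.dvd_sub hn hkm
      exact Or.inr ⟨j, by omega⟩
  · rintro (⟨hn, -⟩ | ⟨j, rfl⟩)
    exacts [hn, dvd_add hkm (dvd_mul_right _ _)]

section GenFun

variable {q : ℝ} (hq0 : 0 ≤ q) (hq1 : q < 1)
include hq0 hq1

theorem summable_pow_subtype (S : Set ℕ) : Summable fun n : S ↦ q ^ (n : ℕ) :=
  (summable_geometric_of_lt_one hq0 hq1).subtype S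

theorem genFun_union {S T : Set ℕ} (hST : Disjoint S T) :
    genFun (S ∪ T) q = genFun S q + genFun T q :=
  Summable.tsum_union_disjoint hST (summable_pow_subtype hq0 hq1 S)
    (summable_pow_subtype hq0 hq1 T)

theorem tsum_pow_add_mul (a : ℕ) {k : ℕ} (hk : k ≠ 0) :
    ∑' j : ℕ, q ^ (a + k * j) = q ^ a / (1 - q ^ k) := by
  simp_rw [pow_add, pow_mul]
  rw [tsum_mul_left, tsum_geometric_of_lt_one (by positivity) (pow_lt_one₀ hq0 hq1 hk),
    div_eq_mul_inv]

theorem genFun_range_add_mul (a : ℕ) {k : ℕ} (hk : 0 < k) :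
    genFun (Set.range fun j ↦ a + k * j) q = q ^ a / (1 - q ^ k) := by
  rw [genFun, tsum_range (fun n : ℕ ↦ q ^ n), tsum_pow_add_mul hq0 hq1 a hk.ne']
  intro i j h
  simpa [hk.ne'] using h

theorem genFun_setOf_dvd {k m : ℕ} (hk : 0 < k) (hkm : k ∣ m) :
    genFun {n | k ∣ n} q = genFun {n | k ∣ n ∧ n < m} q + q ^ m / (1 - q ^ k) := by
  rw [setOf_dvd_eq_union hkm, genFun_union hq0 hq1, genFun_range_add_mul hq0 hq1 m hk]
  rw [Set.disjoint_right]
  rintro _ ⟨j, rfl⟩ ⟨-, h⟩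
  dsimp only at h
  omega

theorem genFun_le_of_separated {k a : ℕ} (hk : 0 < k) {S : Set ℕ}
    (hS : ∀ x ∈ S, ∀ y ∈ S, x < y → x + k ≤ y) (ha : ∀ x ∈ S, a ≤ x) :
    genFun S q ≤ q ^ a / (1 - q ^ k) := by
  set g : ℕ → ℝ := fun j ↦ q ^ (a + k * j)
  set f : S → ℕ := fun x ↦ (x - a) / k
  have hf : StrictMono f := by
    intro x y hxy
    have hxy' : (x - a) + k ≤ y - a := by
      have hsep := hS x x.2 y y.2 hxy
      have hax := ha x x.2
      omega
    have hdiv := Nat.div_le_div_right (c := k) hxy'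
    rwa [Nat.add_div_right _ hk] at hdiv
  have hg : Summable g :=
    (summable_geometric_of_lt_one hq0 hq1).comp_injective fun i j h ↦ by simpa [g, hk.ne'] using h
  calc genFun S q ≤ ∑' x : S, g (f x) := by
        refine Summable.tsum_le_tsum (fun x ↦ pow_le_pow_of_le_one hq0 hq1.le ?_)
          (summable_pow_subtype hq0 hq1 S) (hg.comp_injective hf.injective)
        show a + k * ((x - a) / k) ≤ x
        have hdiv := Nat.mul_div_le (x - a) k
        have hax := ha x x.2
        omega
    _ ≤ ∑' j, g j := tsum_comp_le_tsum_of_inj hg (fun _ ↦ by positivity) hf.injective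
    _ = q ^ a / (1 - q ^ k) := tsum_pow_add_mul hq0 hq1 a hk.ne'

theorem one_div_sub_mul_le_pow_mul_div {k : ℕ} (hk : 0 < k) (m : ℕ) :
    1 / k - m / k * (1 - q) ≤ q ^ m * (1 - q) / (1 - q ^ k) := by
  have bernoulli (n : ℕ) : 1 - n * (1 - q) ≤ q ^ n := by
    have := one_add_mul_le_pow (show -2 ≤ q - 1 by linarith) n
    rw [add_sub_cancel] at this
    linarith
  have hqk : 0 < 1 - q ^ k := by linarith [pow_lt_one₀ hq0 hq1 hk.ne']
  have hkR : (0 : ℝ) < k := by exact_mod_cast hk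
  rw [le_div_iff₀ hqk]
  calc (1 / k - m / k * (1 - q)) * (1 - q ^ k) = (1 - m * (1 - q)) * ((1 - q ^ k) / k) := by ring
    _ ≤ q ^ m * ((1 - q ^ k) / k) := mul_le_mul_of_nonneg_right (bernoulli m) (by positivity)
    _ ≤ q ^ m * (1 - q) :=
      mul_le_mul_of_nonneg_left (by rw [div_le_iff₀ hkR]; linarith [bernoulli k]) (by positivity)

end GenFun

theorem efficiency_gap (k : ℕ) (hk : 2 ≤ k) (S : Set ℕ)
    (hS : DAvoiding (Finset.Icc 1 (k - 1)) S)
    (hne : S ≠ {n : ℕ | k ∣ n}) :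
    ∃ C > (0 : ℝ), ∃ ε > (0 : ℝ), ∀ q ∈ Set.Ioo (1 - ε) (1 : ℝ),
      genFun S q ≤ genFun {n : ℕ | k ∣ n} q - 1 / k + C * (1 - q) := by
  have hk0 : 0 < k := by omega
  have hsep : ∀ x ∈ S, ∀ y ∈ S, x < y → x + k ≤ y := fun x hx y hy ↦ hS.add_le_of_lt hx hy
  obtain ⟨m, hkm, hAS, hSm⟩ := exists_eq_multiples_below hk0 hsep hne
  set A := {n | k ∣ n ∧ n < m}
  refine ⟨m / k + 1, by positivity, 1, one_pos, fun q ⟨hq0, hq1⟩ ↦ ?_⟩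
  replace hq0 : 0 ≤ q := by linarith
  have hS_split : genFun S q = genFun A q + genFun (S \ A) q := by
    rw [← genFun_union hq0 hq1 Set.disjoint_sdiff_right, Set.union_sdiff_cancel hAS]
  have hrest : genFun (S \ A) q ≤ q ^ (m + 1) / (1 - q ^ k) := by
    refine genFun_le_of_separated hq0 hq1 hk0 (fun x hx y hy ↦ hsep x hx.1 y hy.1) ?_
    rintro x ⟨hx, hxA⟩
    by_contra! hxm
    exact hxA (hSm x hx (Nat.lt_succ_iff.mp hxm))
  have hgap := one_div_sub_mul_le_pow_mul_div hq0 hq1 hk0 m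
  have hgap_eq :
      q ^ m * (1 - q) / (1 - q ^ k) = q ^ m / (1 - q ^ k) - q ^ (m + 1) / (1 - q ^ k) := by
    ring
  rw [hS_split, genFun_setOf_dvd hq0 hq1 hk0 hkm]
  linarith
end
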